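/- arXiv:2509.17782 — 10 statements merged into one kernel-verified Lean document; each statement's English description precedes it below -/
import Mathlib

section
/- Let V be an operator system in M_n(ℂ) with dim(V) ≤ 2. Then V is strongly triangle-free, i.e., every rank 3 orthogonal projection in M_n(ℂ) dominates a 2-anticlique for V. -/
open Matrix

/-- An orthogonal projection in `M_n(ℂ)`: a Hermitian idempotent matrix. -/
def IsProjection {n : ℕ} (P : Matrix (Fin n) (Fin n) ℂ) : Prop :=
  P.IsHermitian ∧ P * P = P

/-- The compression space `PVP = span {PAP : A ∈ V}`. -/
noncomputable def compressionSpace {n : ℕ} (V : Set (Matrix (Fin n) (Fin n) ℂ))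
    (P : Matrix (Fin n) (Fin n) ℂ) : Submodule ℂ (Matrix (Fin n) (Fin n) ℂ) :=
  Submodule.span ℂ ((fun A => P * A * P) '' V)

/-- A `k`-clique for `V`: a rank-`k` projection `P` with `dim (PVP) = k²`. -/
def IsClique {n : ℕ} (V : Set (Matrix (Fin n) (Fin n) ℂ)) (k : ℕ)
    (P : Matrix (Fin n) (Fin n) ℂ) : Prop :=
  IsProjection P ∧ P.rank = k ∧ Module.finrank ℂ (compressionSpace V P) = k ^ 2

/-- A `k`-anticlique for `V`: a rank-`k` projection `P` such that `PAP` is a scalar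
multiple of `P` for every `A ∈ V`. -/
def IsAnticlique {n : ℕ} (V : Set (Matrix (Fin n) (Fin n) ℂ)) (k : ℕ)
    (P : Matrix (Fin n) (Fin n) ℂ) : Prop :=
  IsProjection P ∧ P.rank = k ∧ ∀ A ∈ V, ∃ c : ℂ, P * A * P = c • P

/-- `V` is triangle-free if it has no 3-clique. -/
def TriangleFree {n : ℕ} (V : Set (Matrix (Fin n) (Fin n) ℂ)) : Prop :=
  ∀ P : Matrix (Fin n) (Fin n) ℂ, ¬ IsClique V 3 P

/-- `V` is strongly triangle-free if every rank-3 projection dominates a 2-anticlique. -/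
def StronglyTriangleFree {n : ℕ} (V : Set (Matrix (Fin n) (Fin n) ℂ)) : Prop :=
  ∀ Q : Matrix (Fin n) (Fin n) ℂ, IsProjection Q → Q.rank = 3 →
    ∃ P : Matrix (Fin n) (Fin n) ℂ, IsAnticlique V 2 P ∧ P * Q = P ∧ Q * P = P

namespace STFAux

variable {n : ℕ}

lemma vmv_mulVec (a b x : Fin n → ℂ) : vecMulVec a b *ᵥ x = (b ⬝ᵥ x) • a := by
  ext i
  simp [mulVec, vecMulVec_apply, dotProduct, Finset.sum_mul, Finset.mul_sum, mul_comm, mul_assoc,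
    mul_left_comm]

lemma vmv_mul (a b : Fin n → ℂ) (M : Matrix (Fin n) (Fin n) ℂ) :
    vecMulVec a b * M = vecMulVec a (b ᵥ* M) := by
  ext i j
  simp [mul_apply, vecMulVec_apply, vecMul, dotProduct, Finset.mul_sum, mul_assoc]

lemma mul_vmv (a b : Fin n → ℂ) (M : Matrix (Fin n) (Fin n) ℂ) :
    M * vecMulVec a b = vecMulVec (M *ᵥ a) b := by
  ext i j
  simp only [mul_apply, vecMulVec_apply, mulVec, dotProduct, Finset.sum_mul]
  exact Finset.sum_congr rfl fun x _ => by ring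

lemma vmv_smul (a : Fin n → ℂ) (c : ℂ) (b : Fin n → ℂ) :
    vecMulVec a (c • b) = c • vecMulVec a b := by
  ext i j; simp [vecMulVec_apply, mul_comm, mul_left_comm]

lemma vmv_mul_vmv (a b c d : Fin n → ℂ) (M : Matrix (Fin n) (Fin n) ℂ) :
    vecMulVec a b * M * vecMulVec c d = (b ⬝ᵥ (M *ᵥ c)) • vecMulVec a d := by
  rw [Matrix.mul_assoc, mul_vmv, vmv_mul]
  have : b ᵥ* vecMulVec (M *ᵥ c) d = (b ⬝ᵥ (M *ᵥ c)) • d := by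
    ext j
    simp [vecMul, vecMulVec_apply, dotProduct, Finset.sum_mul, mul_assoc]
  rw [this, vmv_smul]

lemma vmv_mul_vmv' (a b c d : Fin n → ℂ) :
    vecMulVec a b * vecMulVec c d = (b ⬝ᵥ c) • vecMulVec a d := by
  have := vmv_mul_vmv a b c d 1
  simpa using this

lemma vmv_herm (a : Fin n → ℂ) : (vecMulVec a (star a)).IsHermitian := by
  ext i j
  simp [conjTranspose_apply, vecMulVec_apply, mul_comm]

lemma pair_proj (w1 w2 : Fin n → ℂ)
    (h11 : star w1 ⬝ᵥ w1 = 1) (h22 : star w2 ⬝ᵥ w2 = 1)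
    (h12 : star w1 ⬝ᵥ w2 = 0) (h21 : star w2 ⬝ᵥ w1 = 0) :
    IsProjection (vecMulVec w1 (star w1) + vecMulVec w2 (star w2)) ∧
      (vecMulVec w1 (star w1) + vecMulVec w2 (star w2)).rank = 2 := by
  set P := vecMulVec w1 (star w1) + vecMulVec w2 (star w2) with hP
  have hherm : P.IsHermitian := (vmv_herm w1).add (vmv_herm w2)
  have hidem : P * P = P := by
    simp only [hP, add_mul, mul_add, vmv_mul_vmv', h11, h12, h21, h22, one_smul, zero_smul]
    abel
  refine ⟨⟨hherm, hidem⟩, ?_⟩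
  have hli : LinearIndependent ℂ ![w1, w2] := by
    rw [LinearIndependent.pair_iff]
    intro s t hst
    constructor
    · have := congrArg (fun x => star w1 ⬝ᵥ x) hst
      simpa [dotProduct_add, dotProduct_smul, h11, h12] using this
    · have := congrArg (fun x => star w2 ⬝ᵥ x) hst
      simpa [dotProduct_add, dotProduct_smul, h21, h22] using this
  have hrange : LinearMap.range P.mulVecLin = Submodule.span ℂ (Set.range ![w1, w2]) := by
    apply le_antisymm
    · rintro x ⟨y, rfl⟩
      have : P.mulVecLin y = (star w1 ⬝ᵥ y) • w1 + (star w2 ⬝ᵥ y) • w2 := by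
        simp [mulVecLin_apply, hP, add_mulVec, vmv_mulVec]
      rw [this]
      apply Submodule.add_mem
      · exact Submodule.smul_mem _ _ (Submodule.subset_span ⟨0, rfl⟩)
      · exact Submodule.smul_mem _ _ (Submodule.subset_span ⟨1, rfl⟩)
    · rw [Submodule.span_le]
      rintro x ⟨i, rfl⟩
      fin_cases i
      · exact ⟨w1, by simp [mulVecLin_apply, hP, add_mulVec, vmv_mulVec, h11, h21]⟩
      · exact ⟨w2, by simp [mulVecLin_apply, hP, add_mulVec, vmv_mulVec, h12, h22]⟩
  rw [Matrix.rank, hrange, finrank_span_eq_card hli]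
  simp

lemma stepA (Q : Matrix (Fin n) (Fin n) ℂ) (hQ : IsProjection Q) (hQ3 : Q.rank = 3) :
    ∃ u : Fin 3 → (Fin n → ℂ),
      (∀ k l, star (u k) ⬝ᵥ u l = if k = l then 1 else 0) ∧ (∀ k, Q *ᵥ u k = u k) := by
  obtain ⟨hQh, hQ2⟩ := hQ
  obtain ⟨u, horth, hev⟩ : ∃ u : Fin 3 → (Fin n → ℂ),
      (∀ k l, star (u k) ⬝ᵥ u l = if k = l then 1 else 0) ∧
      (∀ k, ∃ lam : ℂ, lam ≠ 0 ∧ Q *ᵥ u k = lam • u k) := by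
    have hcard : Fintype.card {i // hQh.eigenvalues i ≠ 0} = 3 := by
      rw [← hQh.rank_eq_card_non_zero_eigs, hQ3]
    let e : Fin 3 ≃ {i // hQh.eigenvalues i ≠ 0} := (Fintype.equivFinOfCardEq hcard).symm
    refine ⟨fun k => ⇑(hQh.eigenvectorBasis (e k).1), ?_, ?_⟩
    · intro k l
      have h := orthonormal_iff_ite.mp hQh.eigenvectorBasis.orthonormal (e k).1 (e l).1
      rw [EuclideanSpace.inner_eq_star_dotProduct] at h
      rw [dotProduct_comm] at h
      have hinj : ((e k).1 = (e l).1) ↔ (k = l) :=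
        ⟨fun h' => e.injective (Subtype.ext h'), fun h' => by rw [h']⟩
      simp only [hinj] at h
      exact h
    · intro k
      refine ⟨(hQh.eigenvalues (e k).1 : ℂ), by exact_mod_cast (e k).2, ?_⟩
      have hev := hQh.mulVec_eigenvectorBasis (e k).1
      rw [hev]; ext i; simp [Complex.real_smul]
  refine ⟨u, horth, fun k => ?_⟩
  obtain ⟨lam, hne, hev'⟩ := hev k
  have hvne : u k ≠ 0 := by
    intro h
    have h1 := horth k k
    rw [h, if_pos rfl] at h1
    simp at h1
  have h2 : (lam * lam) • u k = lam • u k :=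
    calc (lam * lam) • u k = lam • (lam • u k) := by rw [smul_smul]
      _ = lam • (Q *ᵥ u k) := by rw [hev']
      _ = Q *ᵥ (lam • u k) := by rw [mulVec_smul]
      _ = Q *ᵥ (Q *ᵥ u k) := by rw [hev']
      _ = (Q * Q) *ᵥ u k := by rw [mulVec_mulVec]
      _ = Q *ᵥ u k := by rw [hQ2]
      _ = lam • u k := hev'
  have h3 : (lam * lam - lam) • u k = 0 := by rw [sub_smul, h2, sub_self]
  rcases smul_eq_zero.mp h3 with h4 | h4
  · have h5 : lam * (lam - 1) = 0 := by ring_nf; linear_combination h4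
    rcases mul_eq_zero.mp h5 with h6 | h6
    · exact absurd h6 hne
    · have : lam = 1 := by linear_combination h6
      rw [hev', this, one_smul]
  · exact absurd h4 hvne

lemma dot_conjU (U : Matrix (Fin n) (Fin 3) ℂ) (M : Matrix (Fin n) (Fin n) ℂ) (x y : Fin 3 → ℂ) :
    star (U *ᵥ x) ⬝ᵥ (M *ᵥ (U *ᵥ y)) = star x ⬝ᵥ ((Uᴴ * M * U) *ᵥ y) := by
  rw [star_mulVec, mulVec_mulVec, dotProduct_mulVec, vecMul_vecMul, Matrix.mul_assoc,
    dotProduct_mulVec]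

lemma dot_U (U : Matrix (Fin n) (Fin 3) ℂ) (x y : Fin 3 → ℂ) :
    star (U *ᵥ x) ⬝ᵥ (U *ᵥ y) = star x ⬝ᵥ ((Uᴴ * U) *ᵥ y) := by
  rw [star_mulVec, dotProduct_mulVec, vecMul_vecMul, dotProduct_mulVec]

lemma stepB (Q B : Matrix (Fin n) (Fin n) ℂ) (hB : B.IsHermitian)
    (u : Fin 3 → (Fin n → ℂ))
    (horth : ∀ k l, star (u k) ⬝ᵥ u l = if k = l then 1 else 0)
    (hQu : ∀ k, Q *ᵥ u k = u k) :
    ∃ (v : Fin 3 → (Fin n → ℂ)) (μ : Fin 3 → ℝ),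
      (∀ k l, star (v k) ⬝ᵥ v l = if k = l then 1 else 0) ∧
      (∀ k, Q *ᵥ v k = v k) ∧
      (∀ k l, star (v k) ⬝ᵥ (B *ᵥ v l) = (μ l : ℂ) * (if k = l then 1 else 0)) := by
  set U : Matrix (Fin n) (Fin 3) ℂ := Matrix.of (fun j i => u i j) with hU
  have hUU : Uᴴ * U = 1 := by
    ext k l
    have := horth k l
    simp only [mul_apply, conjTranspose_apply, hU, Matrix.of_apply, one_apply]
    simpa [dotProduct] using this
  have hQU : Q * U = U := by
    ext j k
    have := congrFun (hQu k) j
    simp only [mul_apply, hU, Matrix.of_apply]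
    simpa [mulVec, dotProduct] using this
  set T : Matrix (Fin 3) (Fin 3) ℂ := Uᴴ * B * U with hT
  have hTh : T.IsHermitian := by
    rw [Matrix.IsHermitian, hT, conjTranspose_mul, conjTranspose_mul, conjTranspose_conjTranspose,
      hB.eq, Matrix.mul_assoc]
  set μ : Fin 3 → ℝ := hTh.eigenvalues with hμ
  set g : Fin 3 → (Fin 3 → ℂ) := fun k => ⇑(hTh.eigenvectorBasis k) with hg
  have hgev : ∀ k, T *ᵥ g k = (μ k : ℂ) • g k := by
    intro k
    ext i
    have h := congrFun (hTh.mulVec_eigenvectorBasis k) i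
    simpa [Complex.real_smul] using h
  have hgorth : ∀ k l, star (g k) ⬝ᵥ g l = if k = l then 1 else 0 := by
    intro k l
    have h := orthonormal_iff_ite.mp hTh.eigenvectorBasis.orthonormal k l
    rw [EuclideanSpace.inner_eq_star_dotProduct] at h
    rw [dotProduct_comm] at h
    exact h
  refine ⟨fun k => U *ᵥ g k, μ, ?_, ?_, ?_⟩
  · intro k l
    rw [dot_U, hUU, one_mulVec, hgorth]
  · intro k
    rw [mulVec_mulVec, hQU]
  · intro k l
    rw [dot_conjU, ← hT, hgev, dotProduct_smul, hgorth, smul_eq_mul]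

lemma median3 (μ : Fin 3 → ℝ) :
    ∃ a b c : Fin 3, a ≠ b ∧ a ≠ c ∧ b ≠ c ∧ μ a ≤ μ b ∧ μ b ≤ μ c := by
  rcases le_total (μ 0) (μ 1) with h01 | h01 <;> rcases le_total (μ 1) (μ 2) with h12 | h12 <;>
    rcases le_total (μ 0) (μ 2) with h02 | h02
  · exact ⟨0, 1, 2, by decide, by decide, by decide, h01, h12⟩
  · exact ⟨0, 1, 2, by decide, by decide, by decide, h01, h12⟩
  · exact ⟨0, 2, 1, by decide, by decide, by decide, h02, h12⟩
  · exact ⟨2, 0, 1, by decide, by decide, by decide, h02, h01⟩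
  · exact ⟨1, 0, 2, by decide, by decide, by decide, h01, h02⟩
  · exact ⟨1, 2, 0, by decide, by decide, by decide, h12, h02⟩
  · exact ⟨0, 2, 1, by decide, by decide, by decide, h02, h12⟩
  · exact ⟨2, 1, 0, by decide, by decide, by decide, h12, h01⟩

lemma median_exists {μa μb μc : ℝ} (hab : μa ≤ μb) (hbc : μb ≤ μc) :
    ∃ t : ℝ, 0 ≤ t ∧ t ≤ 1 ∧ t * μa + (1 - t) * μc = μb := by
  rcases eq_or_lt_of_le (hab.trans hbc) with h | h
  · exact ⟨1, zero_le_one, le_refl 1, by rw [← h]; linarith⟩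
  · have hca : μc - μa ≠ 0 := by linarith
    refine ⟨(μc - μb) / (μc - μa), div_nonneg (by linarith) (by linarith), ?_, ?_⟩
    · rw [div_le_one (by linarith)]; linarith
    · field_simp
      ring

/-- The key construction: for a Hermitian `B` and a rank-3 projection `Q` there is a rank-2
subprojection `P ≤ Q` compressing `B` to a scalar. -/
lemma key (B Q : Matrix (Fin n) (Fin n) ℂ) (hB : B.IsHermitian)
    (hQp : IsProjection Q) (hQ3 : Q.rank = 3) :
    ∃ P : Matrix (Fin n) (Fin n) ℂ, IsProjection P ∧ P.rank = 2 ∧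
      (∃ c : ℂ, P * B * P = c • P) ∧ P * Q = P ∧ Q * P = P := by
  obtain ⟨u, horth, hQu⟩ := stepA Q hQp hQ3
  obtain ⟨v, μ, hvv, hQv, hBv⟩ := stepB Q B hB u horth hQu
  obtain ⟨a, b, c, hab, hac, hbc, h1, h2⟩ := median3 μ
  obtain ⟨t, ht0, ht1, hteq⟩ := median_exists h1 h2
  set s := Real.sqrt t with hsdef
  set r := Real.sqrt (1 - t) with hrdef
  have hs2 : s * s = t := Real.mul_self_sqrt ht0
  have hr2 : r * r = 1 - t := Real.mul_self_sqrt (by linarith)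
  set w : Fin n → ℂ := (s : ℂ) • v a + (r : ℂ) • v c with hw
  have hδ : ∀ k l, k ≠ l → star (v k) ⬝ᵥ v l = 0 := fun k l h => by rw [hvv]; simp [h]
  have hδ' : ∀ k, star (v k) ⬝ᵥ v k = 1 := fun k => by rw [hvv]; simp
  have hB0 : ∀ k l, k ≠ l → star (v k) ⬝ᵥ (B *ᵥ v l) = 0 := fun k l h => by rw [hBv]; simp [h]
  have hBd : ∀ k, star (v k) ⬝ᵥ (B *ᵥ v k) = (μ k : ℂ) := fun k => by rw [hBv]; simp
  have hsw : star w = (s : ℂ) • star (v a) + (r : ℂ) • star (v c) := by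
    rw [hw]
    simp [star_add, star_smul, Complex.star_def, Complex.conj_ofReal]
  have hww : star w ⬝ᵥ w = 1 := by
    rw [hsw, hw]
    simp only [add_dotProduct, smul_dotProduct, dotProduct_add, dotProduct_smul,
      hδ', hδ a c hac, hδ c a (Ne.symm hac), smul_eq_mul, mul_zero, mul_one, add_zero, zero_add]
    have : ((s * s + r * r : ℝ) : ℂ) = 1 := by rw [hs2, hr2]; norm_num
    push_cast at this
    linear_combination this
  have hwb : star w ⬝ᵥ v b = 0 := by
    rw [hsw]
    simp [add_dotProduct, smul_dotProduct, hδ a b hab, hδ c b (Ne.symm hbc)]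
  have hbw : star (v b) ⬝ᵥ w = 0 := by
    rw [hw]
    simp [dotProduct_add, dotProduct_smul, hδ b a (Ne.symm hab), hδ b c hbc]
  have hBww : star w ⬝ᵥ (B *ᵥ w) = (μ b : ℂ) := by
    rw [hsw, hw, mulVec_add, mulVec_smul, mulVec_smul]
    simp only [add_dotProduct, smul_dotProduct, dotProduct_add, dotProduct_smul,
      hBd, hB0 a c hac, hB0 c a (Ne.symm hac), smul_eq_mul, mul_zero, add_zero, zero_add]
    have : ((s * s * μ a + r * r * μ c : ℝ) : ℂ) = ((μ b : ℝ) : ℂ) := by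
      rw [hs2, hr2]; exact_mod_cast congrArg (fun x : ℝ => (x : ℂ)) hteq
    push_cast at this
    linear_combination this
  have hBwb : star w ⬝ᵥ (B *ᵥ v b) = 0 := by
    rw [hsw]
    simp [add_dotProduct, smul_dotProduct, hB0 a b hab, hB0 c b (Ne.symm hbc)]
  have hBbw : star (v b) ⬝ᵥ (B *ᵥ w) = 0 := by
    rw [hw, mulVec_add, mulVec_smul, mulVec_smul]
    simp [dotProduct_add, dotProduct_smul, hB0 b a (Ne.symm hab), hB0 b c hbc]
  have hQw : Q *ᵥ w = w := by
    rw [hw, mulVec_add, mulVec_smul, mulVec_smul, hQv, hQv]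
  set P : Matrix (Fin n) (Fin n) ℂ :=
    vecMulVec w (star w) + vecMulVec (v b) (star (v b)) with hP
  obtain ⟨hPproj, hPrank⟩ := pair_proj w (v b) hww (hδ' b) hwb hbw
  have hQh : Qᴴ = Q := hQp.1
  have hPQ : P * Q = P := by
    have hcw : star w ᵥ* Q = star w := by
      calc star w ᵥ* Q = star w ᵥ* Qᴴ := by rw [hQh]
        _ = star (Q *ᵥ w) := (star_mulVec Q w).symm
        _ = star w := by rw [hQw]
    have hcb : star (v b) ᵥ* Q = star (v b) := by
      calc star (v b) ᵥ* Q = star (v b) ᵥ* Qᴴ := by rw [hQh]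
        _ = star (Q *ᵥ v b) := (star_mulVec Q (v b)).symm
        _ = star (v b) := by rw [hQv]
    rw [hP, add_mul, vmv_mul, vmv_mul, hcw, hcb]
  have hQP : Q * P = P := by
    rw [hP, mul_add, mul_vmv, mul_vmv, hQw, hQv]
  refine ⟨P, hPproj, hPrank, ⟨(μ b : ℂ), ?_⟩, hPQ, hQP⟩
  rw [hP]
  simp only [add_mul, mul_add, vmv_mul_vmv, hBww, hBwb, hBbw, hBd b,
    zero_smul, add_zero, zero_add, smul_add]

end STFAux

/-- Every operator system in `M_n(ℂ)` of dimension at most 2 is strongly triangle-free. -/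
theorem dim_le_two_stronglyTriangleFree {n : ℕ} (V : Submodule ℂ (Matrix (Fin n) (Fin n) ℂ))
    (h1 : (1 : Matrix (Fin n) (Fin n) ℂ) ∈ V)
    (hstar : ∀ A ∈ V, Aᴴ ∈ V)
    (hdim : Module.finrank ℂ V ≤ 2) :
    StronglyTriangleFree (V : Set (Matrix (Fin n) (Fin n) ℂ)) := by
  intro Q hQp hQ3
  have hn : 0 < n := by
    have h3 := Q.rank_le_card_width
    rw [hQ3] at h3
    simp only [Fintype.card_fin] at h3
    omega
  have hone : (1 : Matrix (Fin n) (Fin n) ℂ) ≠ 0 := by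
    intro h
    have := congrFun (congrFun h ⟨0, hn⟩) ⟨0, hn⟩
    simp [Matrix.one_apply] at this
  -- from any non-scalar Hermitian member, get a spanning description of V
  have hfinal : ∀ B0 : Matrix (Fin n) (Fin n) ℂ, B0 ∈ V → (¬∃ a : ℂ, B0 = a • 1) →
      B0.IsHermitian → ∃ B : Matrix (Fin n) (Fin n) ℂ, B.IsHermitian ∧
        ∀ A ∈ V, ∃ a b : ℂ, A = a • 1 + b • B := by
    intro B0 hB0V hB0ns hB0h
    refine ⟨B0, hB0h, ?_⟩
    have hli : LinearIndependent ℂ ![(1 : Matrix (Fin n) (Fin n) ℂ), B0] := by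
      rw [LinearIndependent.pair_iff]
      intro s t hst
      by_cases ht : t = 0
      · subst ht
        rw [zero_smul, add_zero] at hst
        rcases smul_eq_zero.mp hst with hs | hs
        · exact ⟨hs, rfl⟩
        · exact absurd hs hone
      · exfalso
        apply hB0ns
        refine ⟨-s / t, ?_⟩
        have h2 : t • B0 = (-s) • (1 : Matrix (Fin n) (Fin n) ℂ) := by
          rw [neg_smul, eq_neg_iff_add_eq_zero, add_comm]
          exact hst
        calc B0 = (t⁻¹ * t) • B0 := by rw [inv_mul_cancel₀ ht, one_smul]
          _ = t⁻¹ • (t • B0) := by rw [mul_smul]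
          _ = t⁻¹ • ((-s) • (1 : Matrix (Fin n) (Fin n) ℂ)) := by rw [h2]
          _ = (-s / t) • 1 := by rw [smul_smul, div_eq_mul_inv, mul_comm]
    have hspan : Submodule.span ℂ (Set.range ![(1 : Matrix (Fin n) (Fin n) ℂ), B0]) ≤ V := by
      rw [Submodule.span_le]
      rintro x ⟨i, rfl⟩
      fin_cases i
      · exact h1
      · exact hB0V
    have heq : V = Submodule.span ℂ (Set.range ![(1 : Matrix (Fin n) (Fin n) ℂ), B0]) := by
      refine (Submodule.eq_of_le_of_finrank_le hspan ?_).symm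
      rw [finrank_span_eq_card hli]
      simpa using hdim
    intro A hA
    rw [heq] at hA
    rw [Submodule.mem_span_range_iff_exists_fun] at hA
    obtain ⟨f, hf⟩ := hA
    exact ⟨f 0, f 1, by rw [← hf]; simp [Fin.sum_univ_two]⟩
  obtain ⟨B, hB, hVB⟩ : ∃ B : Matrix (Fin n) (Fin n) ℂ, B.IsHermitian ∧
      ∀ A ∈ V, ∃ a b : ℂ, A = a • 1 + b • B := by
    by_cases hsc : ∀ A ∈ V, ∃ a : ℂ, A = a • 1
    · refine ⟨0, isHermitian_zero, fun A hA => ?_⟩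
      obtain ⟨a, ha⟩ := hsc A hA
      exact ⟨a, 0, by rw [ha]; simp⟩
    · push_neg at hsc
      obtain ⟨A, hAV, hAns⟩ := hsc
      set H : Matrix (Fin n) (Fin n) ℂ := (1/2 : ℂ) • (A + Aᴴ) with hH
      set K : Matrix (Fin n) (Fin n) ℂ := (-Complex.I/2 : ℂ) • (A - Aᴴ) with hK
      have hHV : H ∈ V := Submodule.smul_mem _ _ (Submodule.add_mem _ hAV (hstar A hAV))
      have hKV : K ∈ V := Submodule.smul_mem _ _ (Submodule.sub_mem _ hAV (hstar A hAV))
      have hc1 : star ((1 : ℂ)/2) = 1/2 := by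
        rw [Complex.star_def, map_div₀]; simp [Complex.ext_iff]
      have hc2 : star ((-Complex.I)/2 : ℂ) = Complex.I/2 := by
        rw [Complex.star_def, map_div₀, map_neg, Complex.conj_I, Complex.conj_ofNat]; ring
      have hHherm : H.IsHermitian := by
        ext i j
        simp only [hH, conjTranspose_apply, Matrix.smul_apply, Matrix.add_apply, smul_eq_mul,
          star_mul', star_add, star_star, Complex.conj_conj, hc1, Complex.star_def, map_div₀, map_neg,
          _root_.map_one, Complex.conj_I, Complex.conj_ofNat]
        ring
      have hKherm : K.IsHermitian := by
        ext i j
        simp only [hK, conjTranspose_apply, Matrix.smul_apply, Matrix.sub_apply, smul_eq_mul,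
          star_mul', star_sub, star_star, Complex.conj_conj, neg_div, hc2, Complex.star_def, map_div₀, map_neg,
          _root_.map_one, Complex.conj_I, Complex.conj_ofNat]
        ring
      have hI : Complex.I * (-Complex.I / 2) = 1/2 := by
        linear_combination (-1/2 : ℂ) * Complex.I_mul_I
      have hAHK : A = H + Complex.I • K := by
        rw [hH, hK, smul_smul, hI]
        module
      have hnb : (¬∃ a : ℂ, H = a • 1) ∨ (¬∃ a : ℂ, K = a • 1) := by
        by_contra hcon
        push_neg at hcon
        obtain ⟨⟨a, ha⟩, ⟨b, hb⟩⟩ := hcon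
        exact hAns (a + Complex.I * b)
          (by rw [hAHK, ha, hb, smul_smul, ← add_smul])
      rcases hnb with hBc | hBc
      · exact hfinal H hHV hBc hHherm
      · exact hfinal K hKV hBc hKherm
  obtain ⟨P, hPproj, hPrank, ⟨c, hPBP⟩, hPQ, hQP⟩ := STFAux.key B Q hB hQp hQ3
  refine ⟨P, ⟨hPproj, hPrank, fun A hA => ?_⟩, hPQ, hQP⟩
  obtain ⟨a, b, hab⟩ := hVB A hA
  refine ⟨a + b * c, ?_⟩
  rw [hab, Matrix.mul_add, Matrix.add_mul, Matrix.mul_smul, Matrix.smul_mul, Matrix.mul_smul,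
    Matrix.smul_mul, Matrix.mul_one, hPproj.2, hPBP, smul_smul, ← add_smul]
end

section
/- Let M_2 ⊕ M_2 denote the subspace of M_4(ℂ) consisting of all block diagonal matrices [[A,0],[0,B]] with A, B ∈ M_2(ℂ). For every rank 3 orthogonal projection P ∈ M_4(ℂ) there exists a nonzero matrix C ∈ M_2 ⊕ M_2 with PCP = 0. Consequently, every operator system V ⊆ M_4(ℂ) with M_2 ⊕ M_2 ⊆ V and dim(V) = 9 is triangle-free. -/
open Matrix

/-- The subspace `M₂ ⊕ M₂` of `M₄(ℂ)`: block diagonal matrices `[[A,0],[0,B]]`,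
i.e. matrices whose entries vanish whenever the row and column indices lie in
different blocks `{0,1}` and `{2,3}`. -/
def M2oplusM2 : Set (Matrix (Fin 4) (Fin 4) ℂ) :=
  { M | ∀ i j : Fin 4, ¬ ((i : ℕ) < 2 ↔ (j : ℕ) < 2) → M i j = 0 }

/-!
A rank-3 projection `P` on `ℂ⁴` kills some `v ≠ 0`, so `Q = v v*` satisfies `P Q = Q P = 0`.
With `S = diag(1, 1, -1, -1)`, the anticommutator `C = S Q + Q S` has entries `(sᵢ + sⱼ) Qᵢⱼ`:
it vanishes off the diagonal blocks, its diagonal `2 sᵢ |vᵢ|²` is nonzero, and `P C P = 0`.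
Such a `C` lies in the kernel of `A ↦ P A P` on `V`, so `dim PVP < dim V = 9 = 3²`.
-/

open Module

section Compression

variable {n : ℕ}

lemma Submodule.finrank_map_lt_of_mem_ker {K M N : Type*} [DivisionRing K] [AddCommGroup M]
    [Module K M] [AddCommGroup N] [Module K N] [FiniteDimensional K M] (f : M →ₗ[K] N)
    {U : Submodule K M} {x : M} (hxU : x ∈ U) (hx : x ≠ 0) (hfx : f x = 0) :
    finrank K (U.map f) < finrank K U := by
  have hrank := LinearMap.finrank_range_add_finrank_ker (f.domRestrict U)
  rw [LinearMap.range_domRestrict] at hrank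
  have hker : LinearMap.ker (f.domRestrict U) ≠ ⊥ := by
    rw [Submodule.ne_bot_iff]
    exact ⟨⟨x, hxU⟩, hfx, fun h => hx (congrArg Subtype.val h)⟩
  have := Submodule.finrank_eq_zero.not.mpr hker
  omega

lemma compressionSpace_eq_map (V : Submodule ℂ (Matrix (Fin n) (Fin n) ℂ))
    (P : Matrix (Fin n) (Fin n) ℂ) :
    compressionSpace (V : Set (Matrix (Fin n) (Fin n) ℂ)) P =
      V.map (LinearMap.mulLeftRight ℂ (P, P)) := by
  rw [compressionSpace, ← Submodule.span_eq V, ← Submodule.span_image, Submodule.span_eq]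
  rfl

lemma finrank_compressionSpace_lt (V : Submodule ℂ (Matrix (Fin n) (Fin n) ℂ))
    (P : Matrix (Fin n) (Fin n) ℂ) {C : Matrix (Fin n) (Fin n) ℂ} (hC : C ∈ V) (hC0 : C ≠ 0)
    (hPCP : P * C * P = 0) :
    finrank ℂ (compressionSpace (V : Set (Matrix (Fin n) (Fin n) ℂ)) P) < finrank ℂ V := by
  rw [compressionSpace_eq_map]
  exact Submodule.finrank_map_lt_of_mem_ker _ hC hC0 hPCP

lemma triangleFree_of_forall_compression_eq_zero (V : Submodule ℂ (Matrix (Fin n) (Fin n) ℂ))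
    (hV : finrank ℂ V ≤ 9)
    (h : ∀ P : Matrix (Fin n) (Fin n) ℂ, IsProjection P → P.rank = 3 →
      ∃ C ∈ V, C ≠ 0 ∧ P * C * P = 0) :
    TriangleFree (V : Set (Matrix (Fin n) (Fin n) ℂ)) := by
  rintro P ⟨hP, hrank, hcomp⟩
  obtain ⟨C, hC, hC0, hPCP⟩ := h P hP hrank
  have := finrank_compressionSpace_lt V P hC hC0 hPCP
  omega

end Compression

namespace Matrix

variable {ι K : Type*} [Fintype ι]

lemma exists_mulVec_eq_zero_of_rank_lt [DecidableEq ι] [Field K] (M : Matrix ι ι K)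
    (h : M.rank < Fintype.card ι) : ∃ v ≠ 0, M *ᵥ v = 0 := by
  refine exists_mulVec_eq_zero_iff.mpr (by_contra fun hdet => ?_)
  have hunit : IsUnit M := (isUnit_iff_isUnit_det M).mpr (Ne.isUnit hdet)
  exact h.ne (M.rank_of_isUnit hunit)

lemma IsHermitian.vecMulVec_star_mul_eq_zero [CommRing K] [StarRing K]
    {P : Matrix ι ι K} (hP : P.IsHermitian) {v : ι → K} (hv : P *ᵥ v = 0) :
    vecMulVec v (star v) * P = 0 := by
  rw [vecMulVec_mul, ← hP.eq, ← star_mulVec, hv, star_zero, vecMulVec_zero]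

lemma diagonal_mul_add_mul_diagonal_apply [CommRing K] [DecidableEq ι] (s : ι → K)
    (Q : Matrix ι ι K) (i j : ι) :
    (diagonal s * Q + Q * diagonal s) i j = (s i + s j) * Q i j := by
  rw [add_apply, diagonal_mul, mul_diagonal]
  ring

end Matrix

def blockSign (i : Fin 4) : ℂ := if (i : ℕ) < 2 then 1 else -1

lemma blockSign_ne_zero (i : Fin 4) : blockSign i ≠ 0 := by
  unfold blockSign
  split_ifs <;> norm_num

lemma blockSign_add_eq_zero {i j : Fin 4} (h : ¬ ((i : ℕ) < 2 ↔ (j : ℕ) < 2)) :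
    blockSign i + blockSign j = 0 := by
  unfold blockSign
  split_ifs <;> (try norm_num) <;> tauto

lemma anticommutator_blockSign_mem_M2oplusM2 (Q : Matrix (Fin 4) (Fin 4) ℂ) :
    diagonal blockSign * Q + Q * diagonal blockSign ∈ M2oplusM2 := fun i j hij => by
  rw [diagonal_mul_add_mul_diagonal_apply, blockSign_add_eq_zero hij, zero_mul]

lemma anticommutator_blockSign_vecMulVec_ne_zero {v : Fin 4 → ℂ} (hv : v ≠ 0) :
    diagonal blockSign * vecMulVec v (star v) + vecMulVec v (star v) * diagonal blockSign ≠
      0 := by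
  obtain ⟨i, hi⟩ := Function.ne_iff.mp hv
  intro hC
  have hCii := congrFun (congrFun hC i) i
  rw [diagonal_mul_add_mul_diagonal_apply, vecMulVec_apply] at hCii
  have hsi : blockSign i + blockSign i ≠ 0 := by
    rw [← two_mul]
    exact mul_ne_zero two_ne_zero (blockSign_ne_zero i)
  have hvi : v i * star (v i) ≠ 0 := mul_ne_zero hi (star_ne_zero.mpr hi)
  exact mul_ne_zero hsi hvi hCii

lemma exists_mem_M2oplusM2_compression_eq_zero (P : Matrix (Fin 4) (Fin 4) ℂ)
    (hP : IsProjection P) (hrank : P.rank = 3) :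
    ∃ C ∈ M2oplusM2, C ≠ 0 ∧ P * C * P = 0 := by
  obtain ⟨v, hv0, hPv⟩ := P.exists_mulVec_eq_zero_of_rank_lt (by simp [hrank])
  set Q := vecMulVec v (star v)
  set S := diagonal blockSign
  have hPQ : P * Q = 0 := by rw [mul_vecMulVec, hPv, zero_vecMulVec]
  have hQP : Q * P = 0 := hP.1.vecMulVec_star_mul_eq_zero hPv
  refine ⟨_, anticommutator_blockSign_mem_M2oplusM2 Q,
    anticommutator_blockSign_vecMulVec_ne_zero hv0, ?_⟩
  calc P * (S * Q + Q * S) * P = P * S * (Q * P) + P * Q * (S * P) := by noncomm_ring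
    _ = 0 := by rw [hQP, hPQ, mul_zero, zero_mul, add_zero]

/-- For every rank 3 projection `P ∈ M₄(ℂ)` there is a nonzero matrix in
`M₂ ⊕ M₂` compressing to zero on the range of `P`; consequently every
9-dimensional operator system containing `M₂ ⊕ M₂` is triangle-free. -/
theorem m2_oplus_m2_extensions_triangleFree :
    (∀ P : Matrix (Fin 4) (Fin 4) ℂ, IsProjection P → P.rank = 3 →
      ∃ C ∈ M2oplusM2, C ≠ 0 ∧ P * C * P = 0) ∧
    (∀ V : Submodule ℂ (Matrix (Fin 4) (Fin 4) ℂ),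
      (1 : Matrix (Fin 4) (Fin 4) ℂ) ∈ V → (∀ A ∈ V, Aᴴ ∈ V) →
      M2oplusM2 ⊆ (V : Set (Matrix (Fin 4) (Fin 4) ℂ)) →
      Module.finrank ℂ V = 9 →
      TriangleFree (V : Set (Matrix (Fin 4) (Fin 4) ℂ))) := by
  refine ⟨exists_mem_M2oplusM2_compression_eq_zero, fun V _ _ hsub hdim => ?_⟩
  refine triangleFree_of_forall_compression_eq_zero V hdim.le fun P hP hrank => ?_
  obtain ⟨C, hC, hC0, hPCP⟩ := exists_mem_M2oplusM2_compression_eq_zero P hP hrank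
  exact ⟨C, hsub hC, hC0, hPCP⟩
end

section
/- Let V ⊂ M_4(ℂ) be the span of the identity matrix I_4 together with all matrices of the block form [[0,A],[B,0]] with A, B ∈ M_2(ℂ). Then V is a triangle-free operator system: for every rank 3 orthogonal projection P ∈ M_4(ℂ) one has dim(PVP) ≤ 8, so V has no 3-clique. -/
open Matrix

/-- The set of `4 × 4` matrices of the block form `[[0,A],[B,0]]` with `A, B ∈ M₂(ℂ)`:
the entries vanish whenever the row and column indices lie in the same block. -/
def offDiagBlocks : Set (Matrix (Fin 4) (Fin 4) ℂ) :=
  { M | ∀ i j : Fin 4, ((i : ℕ) < 2 ↔ (j : ℕ) < 2) → M i j = 0 }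

/- ### Auxiliary material -/

lemma aux_mul_vecMulVec {n : ℕ} (P : Matrix (Fin n) (Fin n) ℂ) (q w : Fin n → ℂ) :
    P * vecMulVec q w = vecMulVec (P *ᵥ q) w := by
  ext i j
  simp [vecMulVec_apply, mul_apply, mulVec, dotProduct, Finset.sum_mul, mul_assoc]

lemma aux_vecMulVec_mul {n : ℕ} (P : Matrix (Fin n) (Fin n) ℂ) (q w : Fin n → ℂ) :
    vecMulVec q w * P = vecMulVec q (w ᵥ* P) := by
  ext i j
  simp [vecMulVec_apply, mul_apply, vecMul, dotProduct, Finset.mul_sum, mul_assoc]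

lemma aux_key {n : ℕ} (P : Matrix (Fin n) (Fin n) ℂ) (hP : P.IsHermitian)
    (q x y : Fin n → ℂ) (hq : P *ᵥ q = 0) :
    P * (vecMulVec q (star x) + vecMulVec y (star q)) * P = 0 := by
  have h2 : star q ᵥ* P = 0 := by
    have := Matrix.star_mulVec (M := P) (v := q)
    rw [hq, hP.eq] at this
    simpa using this.symm
  rw [mul_add, add_mul, mul_assoc, mul_assoc, aux_vecMulVec_mul, aux_vecMulVec_mul, h2,
    aux_mul_vecMulVec, aux_mul_vecMulVec, hq]
  ext i j; simp [vecMulVec]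

lemma aux_exists_killed (P : Matrix (Fin 4) (Fin 4) ℂ) (hP : P.IsHermitian)
    (q : Fin 4 → ℂ) (hq0 : q ≠ 0) (hq : P *ᵥ q = 0) :
    ∃ M : Matrix (Fin 4) (Fin 4) ℂ, M ∈ offDiagBlocks ∧ M ≠ 0 ∧ P * M * P = 0 := by
  by_cases hu : q 0 = 0 ∧ q 1 = 0
  · by_cases hv : q 2 = 0 ∧ q 3 = 0
    · exact absurd (funext fun i => by fin_cases i <;>
        simp [hu.1, hu.2, hv.1, hv.2]) hq0
    · -- u = 0, v ≠ 0 : M = q ⬝ e₀*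
      refine ⟨_, ?_, ?_, aux_key P hP q ![1,0,0,0] ![0,0,0,0] hq⟩
      · intro i j hij
        fin_cases i <;> fin_cases j <;>
          simp_all [-cons_vecMulVec, -vecMulVec_cons, vecMulVec_apply, vecHead, vecTail, hu.1, hu.2]
      · intro hM0
        rcases not_and_or.mp hv with h | h
        · exact h (by simpa [-cons_vecMulVec, -vecMulVec_cons, vecMulVec_apply, vecHead, vecTail] using congrFun (congrFun hM0 2) 0)
        · exact h (by simpa [-cons_vecMulVec, -vecMulVec_cons, vecMulVec_apply, vecHead, vecTail] using congrFun (congrFun hM0 3) 0)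
  · by_cases hv : q 2 = 0 ∧ q 3 = 0
    · -- v = 0, u ≠ 0 : M = e₂ ⬝ q*
      refine ⟨_, ?_, ?_, aux_key P hP q ![0,0,0,0] ![0,0,1,0] hq⟩
      · intro i j hij
        fin_cases i <;> fin_cases j <;>
          simp_all [-cons_vecMulVec, -vecMulVec_cons, vecMulVec_apply, vecHead, vecTail, hv.1, hv.2]
      · intro hM0
        rcases not_and_or.mp hu with h | h
        · exact h (by simpa [-cons_vecMulVec, -vecMulVec_cons, vecMulVec_apply, vecHead, vecTail] using congrFun (congrFun hM0 2) 0)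
        · exact h (by simpa [-cons_vecMulVec, -vecMulVec_cons, vecMulVec_apply, vecHead, vecTail] using congrFun (congrFun hM0 2) 1)
    · -- u ≠ 0 and v ≠ 0
      refine ⟨_, ?_, ?_, aux_key P hP q ![0,0,q 2,q 3] ![0,0,-(q 2),-(q 3)] hq⟩
      · intro i j hij
        fin_cases i <;> fin_cases j <;> simp_all [-cons_vecMulVec, -vecMulVec_cons, vecMulVec_apply, vecHead, vecTail] <;> ring
      · intro hM0
        rcases not_and_or.mp hu with h1 | h1
        · rcases not_and_or.mp hv with h2 | h2
          · exact absurd (by simpa [-cons_vecMulVec, -vecMulVec_cons, vecMulVec_apply, vecHead, vecTail, mul_eq_zero, h1] using congrFun (congrFun hM0 0) 2) h2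
          · exact absurd (by simpa [-cons_vecMulVec, -vecMulVec_cons, vecMulVec_apply, vecHead, vecTail, mul_eq_zero, h1] using congrFun (congrFun hM0 0) 3) h2
        · rcases not_and_or.mp hv with h2 | h2
          · exact absurd (by simpa [-cons_vecMulVec, -vecMulVec_cons, vecMulVec_apply, vecHead, vecTail, mul_eq_zero, h1] using congrFun (congrFun hM0 1) 2) h2
          · exact absurd (by simpa [-cons_vecMulVec, -vecMulVec_cons, vecMulVec_apply, vecHead, vecTail, mul_eq_zero, h1] using congrFun (congrFun hM0 1) 3) h2

lemma aux_exists_ker_vec (P : Matrix (Fin 4) (Fin 4) ℂ) (hrank : P.rank = 3) :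
    ∃ q : Fin 4 → ℂ, q ≠ 0 ∧ P *ᵥ q = 0 := by
  have h := LinearMap.finrank_range_add_finrank_ker P.mulVecLin
  rw [show Module.finrank ℂ (LinearMap.range P.mulVecLin) = P.rank from rfl, hrank] at h
  simp only [Module.finrank_pi, Fintype.card_fin] at h
  have hpos : 0 < Module.finrank ℂ (LinearMap.ker P.mulVecLin) := by omega
  obtain ⟨⟨q, hq⟩, hq0⟩ := Module.finrank_pos_iff_exists_ne_zero.mp hpos
  exact ⟨q, by simpa [Submodule.mk_eq_zero] using hq0, by simpa using hq⟩

noncomputable def genList : List (Matrix (Fin 4) (Fin 4) ℂ) :=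
  [1, single 0 2 1, single 0 3 1, single 1 2 1, single 1 3 1,
   single 2 0 1, single 2 1 1, single 3 0 1, single 3 1 1]

lemma aux_span_le_genList :
    Submodule.span ℂ ({1} ∪ offDiagBlocks : Set (Matrix (Fin 4) (Fin 4) ℂ)) ≤
      Submodule.span ℂ (genList.toFinset : Set (Matrix (Fin 4) (Fin 4) ℂ)) := by
  rw [Submodule.span_le]
  rintro M (rfl | hM)
  · exact Submodule.subset_span (by simp [genList])
  · rw [SetLike.mem_coe, matrix_eq_sum_single M]
    refine Submodule.sum_mem _ fun i _ => Submodule.sum_mem _ fun j _ => ?_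
    by_cases hij : ((i : ℕ) < 2 ↔ (j : ℕ) < 2)
    · rw [hM i j hij, single_zero]; exact Submodule.zero_mem _
    · have h : single i j (M i j) = M i j • single i j (1:ℂ) := by
        rw [smul_single, smul_eq_mul, mul_one]
      rw [h]
      refine Submodule.smul_mem _ _ (Submodule.subset_span ?_)
      simp only [genList, List.coe_toFinset, List.mem_cons, Set.mem_setOf_eq, List.mem_singleton]
      fin_cases i <;> fin_cases j <;> simp_all

lemma aux_finrank_W_le :
    Module.finrank ℂ (Submodule.span ℂ
      ({1} ∪ offDiagBlocks : Set (Matrix (Fin 4) (Fin 4) ℂ))) ≤ 9 := by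
  refine le_trans (Submodule.finrank_mono aux_span_le_genList) ?_
  refine le_trans (finrank_span_finset_le_card _) ?_
  exact le_trans (List.toFinset_card_le _) (by simp [genList])

lemma aux_compression_le (P : Matrix (Fin 4) (Fin 4) ℂ) (hP : IsProjection P)
    (hrank : P.rank = 3) :
    Module.finrank ℂ (compressionSpace
      (Submodule.span ℂ ({1} ∪ offDiagBlocks : Set (Matrix (Fin 4) (Fin 4) ℂ)) :
        Set (Matrix (Fin 4) (Fin 4) ℂ)) P) ≤ 8 := by
  set W := Submodule.span ℂ ({1} ∪ offDiagBlocks : Set (Matrix (Fin 4) (Fin 4) ℂ)) with hW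
  set L := (LinearMap.mulLeft ℂ P).comp (LinearMap.mulRight ℂ P) with hLdef
  have hL : ∀ A, L A = P * A * P := fun A => (mul_assoc P A P).symm
  have hcomp : compressionSpace (W : Set (Matrix (Fin 4) (Fin 4) ℂ)) P
      = LinearMap.range (L.domRestrict W) := by
    rw [compressionSpace, LinearMap.range_domRestrict]
    have himg : ((fun A => P * A * P) '' (W : Set (Matrix (Fin 4) (Fin 4) ℂ)))
        = ⇑L '' (W : Set (Matrix (Fin 4) (Fin 4) ℂ)) := by
      apply Set.image_congr
      intro A _
      rw [hL]
    rw [himg, Submodule.span_image, Submodule.span_eq]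
  obtain ⟨q, hq0, hq⟩ := aux_exists_ker_vec P hrank
  obtain ⟨M, hMoff, hM0, hPMP⟩ := aux_exists_killed P hP.1 q hq0 hq
  have hMW : M ∈ W := Submodule.subset_span (Or.inr hMoff)
  have hRN := LinearMap.finrank_range_add_finrank_ker (L.domRestrict W)
  have hkerpos : 0 < Module.finrank ℂ (LinearMap.ker (L.domRestrict W)) := by
    refine (Module.finrank_pos_iff_exists_ne_zero (R := ℂ) (M := LinearMap.ker (L.domRestrict W))).mpr ⟨⟨⟨M, hMW⟩, ?_⟩, ?_⟩
    · rw [LinearMap.mem_ker, LinearMap.domRestrict_apply, hL]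
      exact hPMP
    · simp only [ne_eq, Submodule.mk_eq_zero]
      exact hM0
  have hWle : Module.finrank ℂ W ≤ 9 := aux_finrank_W_le
  rw [hcomp]
  omega

/-- The span of `I₄` and all matrices of the form `[[0,A],[B,0]]` is a triangle-free
operator system: every rank 3 projection compresses it to dimension at most 8, so it
has no 3-clique. -/
theorem skew_m2_oplus_m2_triangleFree :
    (1 : Matrix (Fin 4) (Fin 4) ℂ) ∈
        Submodule.span ℂ ({1} ∪ offDiagBlocks : Set (Matrix (Fin 4) (Fin 4) ℂ)) ∧
    (∀ A ∈ Submodule.span ℂ ({1} ∪ offDiagBlocks : Set (Matrix (Fin 4) (Fin 4) ℂ)),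
        Aᴴ ∈ Submodule.span ℂ ({1} ∪ offDiagBlocks : Set (Matrix (Fin 4) (Fin 4) ℂ))) ∧
    (∀ P : Matrix (Fin 4) (Fin 4) ℂ, IsProjection P → P.rank = 3 →
      Module.finrank ℂ (compressionSpace
        (Submodule.span ℂ ({1} ∪ offDiagBlocks : Set (Matrix (Fin 4) (Fin 4) ℂ)) :
          Set (Matrix (Fin 4) (Fin 4) ℂ)) P) ≤ 8) ∧
    TriangleFree (Submodule.span ℂ ({1} ∪ offDiagBlocks : Set (Matrix (Fin 4) (Fin 4) ℂ)) :
      Set (Matrix (Fin 4) (Fin 4) ℂ)) := by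
  refine ⟨Submodule.subset_span (Or.inl rfl), ?_, aux_compression_le, ?_⟩
  · intro A hA
    induction hA using Submodule.span_induction with
    | mem x hx =>
      rcases hx with rfl | hx
      · exact Submodule.subset_span (Or.inl (by simp))
      · refine Submodule.subset_span (Or.inr ?_)
        intro i j hij
        rw [conjTranspose_apply, hx j i hij.symm, star_zero]
    | zero => simp
    | add x y _ _ hx hy => rw [conjTranspose_add]; exact Submodule.add_mem _ hx hy
    | smul c x _ hx => rw [conjTranspose_smul]; exact Submodule.smul_mem _ _ hx
  · rintro P ⟨hproj, hrank, hdim⟩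
    have h := aux_compression_le P hproj hrank
    rw [hdim] at h
    norm_num at h
end

section
/- Let V ⊂ M_4(ℂ) be the set of all 4×4 matrices of the block form [[aI_2, bI_2],[bI_2, cI_2]] with a, b, c ∈ ℂ. Then V is a strongly triangle-free operator system: every rank 3 orthogonal projection in M_4(ℂ) dominates a 2-anticlique for V. -/
open Matrix

/-- The set of `4 × 4` matrices of the block form `[[a·I₂, b·I₂],[b·I₂, c·I₂]]`
with `a, b, c ∈ ℂ`. -/
def twistedSystem : Set (Matrix (Fin 4) (Fin 4) ℂ) :=
  { M | ∃ a b c : ℂ, M = !![a, 0, b, 0; 0, a, 0, b; b, 0, c, 0; 0, b, 0, c] }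

namespace TwistedAux

abbrev V4 := Fin 4 → ℂ

/-- The symplectic-like real orthogonal matrix `I₂ ⊗ [[0,1],[-1,0]]`. -/
def Om : Matrix (Fin 4) (Fin 4) ℂ :=
  !![0, 1, 0, 0; -1, 0, 0, 0; 0, 0, 0, 1; 0, 0, -1, 0]

lemma Om_mul_transpose : Om * Omᵀ = 1 := by
  ext i j
  fin_cases i <;> fin_cases j <;>
    simp [Om, Matrix.mul_apply, Fin.sum_univ_four, Matrix.one_apply,
      Matrix.transpose_apply, Matrix.vecHead, Matrix.vecTail]

lemma isUnit_Om_det : IsUnit Om.det :=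
  IsUnit.of_mul_eq_one Omᵀ.det
    (by rw [← Matrix.det_mul, Om_mul_transpose, Matrix.det_one])

lemma Om_conjTranspose : Omᴴ = Omᵀ := by
  ext i j
  fin_cases i <;> fin_cases j <;>
    simp [Om, Matrix.conjTranspose_apply, Matrix.vecHead, Matrix.vecTail]

/-- The "partner" vector `η = Ω · conj ξ` of `ξ`. -/
def et (ξ : V4) : V4 := ![star (ξ 1), -star (ξ 0), star (ξ 3), -star (ξ 2)]

lemma et_eq (ξ : V4) : et ξ = Om *ᵥ star ξ := by
  ext i
  fin_cases i <;> simp [Om, et, mulVec, dotProduct, Fin.sum_univ_four]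

lemma dot_self_et (ξ : V4) : star (et ξ) ⬝ᵥ et ξ = star ξ ⬝ᵥ ξ := by
  simp [et, dotProduct, Fin.sum_univ_four]
  ring

lemma dot_xi_et (ξ : V4) : star ξ ⬝ᵥ et ξ = 0 := by
  simp [et, dotProduct, Fin.sum_univ_four]
  ring

lemma dot_et_xi (ξ : V4) : star (et ξ) ⬝ᵥ ξ = 0 := by
  simp [et, dotProduct, Fin.sum_univ_four]
  ring

lemma mul_vecMulVec (M : Matrix (Fin 4) (Fin 4) ℂ) (a b : V4) :
    M * vecMulVec a b = vecMulVec (M *ᵥ a) b := by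
  ext i j
  simp [Matrix.mul_apply, vecMulVec_apply, mulVec, dotProduct, Finset.sum_mul, mul_assoc]

lemma vecMulVec_mul_vecMulVec (a b c d : V4) :
    vecMulVec a b * vecMulVec c d = (b ⬝ᵥ c) • vecMulVec a d := by
  ext i j
  simp [Matrix.mul_apply, vecMulVec_apply, dotProduct, Finset.sum_mul, Finset.mul_sum]
  exact Finset.sum_congr rfl fun _ _ => by ring

lemma vecMulVec_mulVec (a b v : V4) :
    vecMulVec a b *ᵥ v = (b ⬝ᵥ v) • a := by
  ext i
  simp [mulVec, dotProduct, vecMulVec_apply, Finset.sum_mul, Finset.mul_sum]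
  exact Finset.sum_congr rfl fun _ _ => by ring

lemma conjTranspose_vecMulVec (a b : V4) :
    (vecMulVec a b)ᴴ = vecMulVec (star b) (star a) := by
  ext i j
  simp [vecMulVec_apply, conjTranspose_apply, mul_comm]

lemma vmv_mul_mat_mul_vmv (u s v t : V4) (M : Matrix (Fin 4) (Fin 4) ℂ) :
    vecMulVec u s * M * vecMulVec v t = (s ⬝ᵥ (M *ᵥ v)) • vecMulVec u t := by
  rw [mul_assoc, mul_vecMulVec, vecMulVec_mul_vecMulVec]

/-- A matrix of the twisted system. -/
def Amat (a b c : ℂ) : Matrix (Fin 4) (Fin 4) ℂ :=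
  !![a, 0, b, 0; 0, a, 0, b; b, 0, c, 0; 0, b, 0, c]

lemma dotA_xi_et (a b c : ℂ) (ξ : V4) :
    star ξ ⬝ᵥ (Amat a b c *ᵥ et ξ) = 0 := by
  simp [Amat, et, mulVec, dotProduct, Fin.sum_univ_four]
  ring

lemma dotA_et_xi (a b c : ℂ) (ξ : V4) :
    star (et ξ) ⬝ᵥ (Amat a b c *ᵥ ξ) = 0 := by
  simp [Amat, et, mulVec, dotProduct, Fin.sum_univ_four]
  ring

lemma dotA_diag (a b c : ℂ) (ξ : V4) :
    star (et ξ) ⬝ᵥ (Amat a b c *ᵥ et ξ) = star ξ ⬝ᵥ (Amat a b c *ᵥ ξ) := by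
  simp [Amat, et, mulVec, dotProduct, Fin.sum_univ_four]
  ring

/-- Existence of a nonzero vector `ξ` in the range of `Q` whose partner `et ξ`
is also in the range of `Q`. -/
lemma exists_xi (Q : Matrix (Fin 4) (Fin 4) ℂ) (hQH : Q.IsHermitian) (hQ2 : Q * Q = Q)
    (hQ3 : Q.rank = 3) :
    ∃ (ξ : V4), ξ ≠ 0 ∧ Q *ᵥ ξ = ξ ∧ Q *ᵥ et ξ = et ξ := by
  set S : Matrix (Fin 4) (Fin 4) ℂ := 1 - Q with hS
  have hSQ : S * Q = 0 := by
    rw [hS, sub_mul, one_mul, hQ2, sub_self]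
  have hSH : Sᴴ = S := by
    rw [hS, conjTranspose_sub, conjTranspose_one, hQH.eq]
  have hSrank : S.rank ≤ 1 := by
    have h1 := LinearMap.finrank_range_add_finrank_ker S.mulVecLin
    have h2 : 3 ≤ Module.finrank ℂ (LinearMap.ker S.mulVecLin) := by
      have hle : LinearMap.range Q.mulVecLin ≤ LinearMap.ker S.mulVecLin := by
        rintro v ⟨w, rfl⟩
        simp [Matrix.mulVecLin_apply, Matrix.mulVec_mulVec, hSQ]
      calc 3 = Q.rank := hQ3.symm
        _ ≤ _ := Submodule.finrank_mono hle
    rw [Module.finrank_fin_fun] at h1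
    have : Matrix.rank S = Module.finrank ℂ (LinearMap.range S.mulVecLin) := rfl
    omega
  have hrank2 : (Sᵀ * Om).rank ≤ 1 := by
    rw [Matrix.rank_mul_eq_left_of_isUnit_det Om Sᵀ isUnit_Om_det, Matrix.rank_transpose]
    exact hSrank
  have hfr1 : 3 ≤ Module.finrank ℂ (LinearMap.ker S.mulVecLin) := by
    have h1 := LinearMap.finrank_range_add_finrank_ker S.mulVecLin
    rw [Module.finrank_fin_fun] at h1
    have : Matrix.rank S = Module.finrank ℂ (LinearMap.range S.mulVecLin) := rfl
    omega
  have hfr2 : 3 ≤ Module.finrank ℂ (LinearMap.ker (Sᵀ * Om).mulVecLin) := by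
    have h1 := LinearMap.finrank_range_add_finrank_ker (Sᵀ * Om).mulVecLin
    rw [Module.finrank_fin_fun] at h1
    have : (Sᵀ * Om).rank = Module.finrank ℂ (LinearMap.range (Sᵀ * Om).mulVecLin) := rfl
    omega
  have hinf : LinearMap.ker S.mulVecLin ⊓ LinearMap.ker (Sᵀ * Om).mulVecLin ≠ ⊥ := by
    have hsum := Submodule.finrank_sup_add_finrank_inf_eq
      (LinearMap.ker S.mulVecLin) (LinearMap.ker (Sᵀ * Om).mulVecLin)
    have hle : Module.finrank ℂ
        ↥(LinearMap.ker S.mulVecLin ⊔ LinearMap.ker (Sᵀ * Om).mulVecLin) ≤ 4 := by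
      have := Submodule.finrank_le (LinearMap.ker S.mulVecLin ⊔ LinearMap.ker (Sᵀ * Om).mulVecLin)
      rwa [Module.finrank_fin_fun] at this
    intro h
    rw [h, finrank_bot] at hsum
    omega
  obtain ⟨ξ, hmem, hne⟩ := Submodule.exists_mem_ne_zero_of_ne_bot hinf
  refine ⟨ξ, hne, ?_, ?_⟩
  · have h1 : S *ᵥ ξ = 0 := hmem.1
    rw [hS, sub_mulVec, one_mulVec, sub_eq_zero] at h1
    exact h1.symm
  · have h2 : (Sᵀ * Om) *ᵥ ξ = 0 := hmem.2
    have h0 : star ((Sᵀ * Om) *ᵥ ξ) = 0 := by rw [h2]; simp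
    rw [Matrix.star_mulVec, conjTranspose_mul, Om_conjTranspose] at h0
    have hTT : Sᵀᴴ = Sᵀ := by
      ext i j
      have := congrFun (congrFun hSH j) i
      simpa [Matrix.conjTranspose_apply, Matrix.transpose_apply] using this
    rw [hTT] at h0
    have hkey : S *ᵥ et ξ = 0 := by
      rw [et_eq, Matrix.mulVec_mulVec, ← Matrix.vecMul_transpose, Matrix.transpose_mul]
      exact h0
    rw [hS, sub_mulVec, one_mulVec, sub_eq_zero] at hkey
    exact hkey.symm

end TwistedAux

open TwistedAux in
/-- The operator system of matrices `[[a·I₂, b·I₂],[b·I₂, c·I₂]]` is strongly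
triangle-free: every rank 3 projection in `M₄(ℂ)` dominates a 2-anticlique for it. -/
theorem twistedSystem_stronglyTriangleFree :
    (1 : Matrix (Fin 4) (Fin 4) ℂ) ∈ twistedSystem ∧
    (∀ A ∈ twistedSystem, Aᴴ ∈ twistedSystem) ∧
    StronglyTriangleFree twistedSystem := by
  refine ⟨⟨1, 0, 1, ?_⟩, ?_, ?_⟩
  · ext i j
    fin_cases i <;> fin_cases j <;>
      simp [Matrix.one_apply, Matrix.vecHead, Matrix.vecTail]
  · rintro A ⟨a, b, c, rfl⟩
    refine ⟨star a, star b, star c, ?_⟩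
    ext i j
    fin_cases i <;> fin_cases j <;>
      simp [Matrix.conjTranspose_apply, Matrix.vecHead, Matrix.vecTail]
  · intro Q hQ hQ3
    obtain ⟨hQH, hQ2⟩ := hQ
    obtain ⟨ξ, hne, hQxi, hQeta⟩ := exists_xi Q hQH hQ2 hQ3
    set d : ℂ := star ξ ⬝ᵥ ξ with hd_def
    have hd : d ≠ 0 := by
      intro h
      apply hne
      have hsum : ∑ i, Complex.normSq (ξ i) = 0 := by
        have hc : ((∑ i, Complex.normSq (ξ i) : ℝ) : ℂ) = 0 := by
          rw [← h, hd_def]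
          push_cast
          simp only [dotProduct, Pi.star_apply]
          exact Finset.sum_congr rfl fun i _ => Complex.normSq_eq_conj_mul_self
        exact_mod_cast hc
      funext i
      exact Complex.normSq_eq_zero.mp
        ((Finset.sum_eq_zero_iff_of_nonneg fun i _ => Complex.normSq_nonneg _).mp hsum
          i (Finset.mem_univ i))
    have hds : star d = d := by
      rw [hd_def]
      simp only [dotProduct, star_sum, star_mul', star_star, Pi.star_apply]
      exact Finset.sum_congr rfl fun _ _ => mul_comm _ _
    set X : Matrix (Fin 4) (Fin 4) ℂ := vecMulVec ξ (star ξ) with hX_def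
    set Y : Matrix (Fin 4) (Fin 4) ℂ := vecMulVec (et ξ) (star (et ξ)) with hY_def
    set P : Matrix (Fin 4) (Fin 4) ℂ := d⁻¹ • (X + Y) with hP_def
    have hZZ : (X + Y) * (X + Y) = d • (X + Y) := by
      rw [add_mul, mul_add, mul_add, hX_def, hY_def]
      rw [vecMulVec_mul_vecMulVec, vecMulVec_mul_vecMulVec,
        vecMulVec_mul_vecMulVec, vecMulVec_mul_vecMulVec,
        dot_xi_et, dot_et_xi, dot_self_et, ← hd_def]
      simp [smul_add]
    have hPH : Pᴴ = P := by
      rw [hP_def, conjTranspose_smul, conjTranspose_add, hX_def, hY_def,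
        conjTranspose_vecMulVec, conjTranspose_vecMulVec, star_star, star_star,
        star_inv₀, hds]
    have hPP : P * P = P := by
      rw [hP_def, smul_mul_assoc, mul_smul_comm, hZZ, smul_smul, smul_smul]
      congr 1
      field_simp
    have hQP : Q * P = P := by
      rw [hP_def, mul_smul_comm, mul_add, hX_def, hY_def,
        mul_vecMulVec, mul_vecMulVec, hQxi, hQeta]
    have hPQ : P * Q = P := by
      have h := congrArg conjTranspose hQP
      rw [conjTranspose_mul, hPH, hQH.eq] at h
      exact h
    have hPv : ∀ v, P *ᵥ v = (d⁻¹ * (star ξ ⬝ᵥ v)) • ξ + (d⁻¹ * (star (et ξ) ⬝ᵥ v)) • et ξ := by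
      intro v
      rw [hP_def, smul_mulVec, add_mulVec, hX_def, hY_def,
        vecMulVec_mulVec, vecMulVec_mulVec, smul_add, smul_smul, smul_smul]
    have hPxi : P *ᵥ ξ = ξ := by
      rw [hPv, dot_et_xi, ← hd_def, inv_mul_cancel₀ hd, one_smul, mul_zero, zero_smul, add_zero]
    have hPeta : P *ᵥ et ξ = et ξ := by
      rw [hPv, dot_xi_et, dot_self_et, ← hd_def, inv_mul_cancel₀ hd, one_smul,
        mul_zero, zero_smul, zero_add]
    have hrange : LinearMap.range P.mulVecLin = Submodule.span ℂ {ξ, et ξ} := by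
      apply le_antisymm
      · rintro v ⟨w, rfl⟩
        rw [Submodule.mem_span_pair]
        exact ⟨d⁻¹ * (star ξ ⬝ᵥ w), d⁻¹ * (star (et ξ) ⬝ᵥ w), by
          rw [Matrix.mulVecLin_apply, hPv w]⟩
      · rw [Submodule.span_le]
        intro u hu
        simp only [Set.mem_insert_iff, Set.mem_singleton_iff] at hu
        rcases hu with h | h
        · exact ⟨ξ, by rw [Matrix.mulVecLin_apply, hPxi, h]⟩
        · exact ⟨et ξ, by rw [Matrix.mulVecLin_apply, hPeta, h]⟩
    have hli : LinearIndependent ℂ ![ξ, et ξ] := by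
      rw [linearIndependent_fin2]
      constructor
      · simp only [Matrix.cons_val_one, Matrix.head_cons]
        intro h
        apply hd
        rw [hd_def, ← dot_self_et, show et ξ = 0 from h]
        simp
      · intro a h
        simp only [Matrix.cons_val_one, Matrix.head_cons, Matrix.cons_val_zero] at h
        apply hd
        have h2 : star ξ ⬝ᵥ (a • et ξ) = star ξ ⬝ᵥ ξ := by rw [h]
        rw [dotProduct_smul, dot_xi_et, smul_zero] at h2
        exact hd_def.trans h2.symm
    have hrank : P.rank = 2 := by
      have h0 : P.rank = Module.finrank ℂ (LinearMap.range P.mulVecLin) := rfl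
      have h1 : ({ξ, et ξ} : Set V4) = Set.range ![ξ, et ξ] :=
        (Matrix.range_cons_cons_empty ξ (et ξ) ![]).symm
      rw [h0, hrange, h1, finrank_span_eq_card hli]
      simp
    refine ⟨P, ⟨⟨hPH, hPP⟩, hrank, ?_⟩, hPQ, hQP⟩
    rintro A ⟨a, b, c, rfl⟩
    show ∃ c', P * Amat a b c * P = c' • P
    refine ⟨d⁻¹ * (star ξ ⬝ᵥ (Amat a b c *ᵥ ξ)), ?_⟩
    have hZAZ : (X + Y) * Amat a b c * (X + Y)
        = (star ξ ⬝ᵥ (Amat a b c *ᵥ ξ)) • (X + Y) := by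
      rw [add_mul, add_mul, mul_add, mul_add, hX_def, hY_def,
        vmv_mul_mat_mul_vmv, vmv_mul_mat_mul_vmv, vmv_mul_mat_mul_vmv, vmv_mul_mat_mul_vmv,
        dotA_xi_et, dotA_et_xi, dotA_diag]
      simp [smul_add]
    calc P * Amat a b c * P = (d⁻¹ * d⁻¹) • ((X + Y) * Amat a b c * (X + Y)) := by
          rw [hP_def, smul_mul_assoc, smul_mul_assoc, mul_smul_comm, smul_smul]
      _ = (d⁻¹ * (star ξ ⬝ᵥ (Amat a b c *ᵥ ξ))) • P := by
          rw [hZAZ, hP_def, smul_smul, smul_smul]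
          ring_nf
end

section
/- Let V ⊆ M_n(ℂ) be an operator system containing Hermitian matrices A and B with AB = BA, such that I_n, A, and B are linearly independent. Then V is not strongly triangle-free. -/
open Matrix

open Module.End

lemma abstract_simdiag {E : Type*} [NormedAddCommGroup E] [InnerProductSpace ℂ E]
    [FiniteDimensional ℂ E] {m : ℕ} (hrank : Module.finrank ℂ E = m)
    (T S : E →ₗ[ℂ] E) (hT : T.IsSymmetric) (hS : S.IsSymmetric) (hC : Commute T S) :
    ∃ (b : OrthonormalBasis (Fin m) ℂ E) (μ ν : Fin m → ℂ),
      ∀ j, T (b j) = μ j • b j ∧ S (b j) = ν j • b j := by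
  classical
  have hint0 : DirectSum.IsInternal (fun p : ℂ × ℂ =>
      (eigenspace T p.2 ⊓ eigenspace S p.1)) :=
    LinearMap.IsSymmetric.directSum_isInternal_of_commute hT hS hC
  have hfam0 := LinearMap.IsSymmetric.orthogonalFamily_eigenspace_inf_eigenspace hT hS
  have hindep := hint0.submodule_iSupIndep
  have hfin : {p : ℂ × ℂ | (eigenspace T p.2 ⊓ eigenspace S p.1) ≠ ⊥}.Finite :=
    Submodule.finite_ne_bot_of_iSupIndep hindep
  haveI : Fintype {p : ℂ × ℂ // (eigenspace T p.2 ⊓ eigenspace S p.1) ≠ ⊥} := hfin.fintype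
  have hint : DirectSum.IsInternal (fun p : {p : ℂ × ℂ // (eigenspace T p.2 ⊓ eigenspace S p.1) ≠ ⊥} =>
      (eigenspace T p.val.2 ⊓ eigenspace S p.val.1)) :=
    DirectSum.isInternal_ne_bot_iff.mpr hint0
  have hfam : OrthogonalFamily ℂ
      (fun p : {p : ℂ × ℂ // (eigenspace T p.2 ⊓ eigenspace S p.1) ≠ ⊥} =>
        ↥(eigenspace T p.val.2 ⊓ eigenspace S p.val.1))
      (fun p => (eigenspace T p.val.2 ⊓ eigenspace S p.val.1).subtypeₗᵢ) :=
    fun i j hij v w => hfam0 (fun h => hij (Subtype.ext h)) v w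
  let b := hint.subordinateOrthonormalBasis hrank hfam
  let idx : Fin m → ℂ × ℂ := fun j => Subtype.val (hint.subordinateOrthonormalBasisIndex hrank j hfam)
  have hmem : ∀ j, b j ∈ (eigenspace T (idx j).2 ⊓ eigenspace S (idx j).1) :=
    fun j => hint.subordinateOrthonormalBasis_subordinate hrank j hfam
  exact ⟨b, fun j => (idx j).2, fun j => (idx j).1,
    fun j => ⟨mem_eigenspace_iff.mp (hmem j).1, mem_eigenspace_iff.mp (hmem j).2⟩⟩


open Matrix in
lemma simdiag {n : ℕ} (A B : Matrix (Fin n) (Fin n) ℂ)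
    (hAh : A.IsHermitian) (hBh : B.IsHermitian) (hcomm : A * B = B * A) :
    ∃ (U : Matrix (Fin n) (Fin n) ℂ) (μ ν : Fin n → ℂ),
      Uᴴ * U = 1 ∧ U * Uᴴ = 1 ∧
      A = U * diagonal μ * Uᴴ ∧ B = U * diagonal ν * Uᴴ := by
  classical
  have hsA : (Matrix.toEuclideanLin A).IsSymmetric :=
    Matrix.isHermitian_iff_isSymmetric.mp hAh
  have hsB : (Matrix.toEuclideanLin B).IsSymmetric :=
    Matrix.isHermitian_iff_isSymmetric.mp hBh
  have key : ∀ (M N : Matrix (Fin n) (Fin n) ℂ) (x : EuclideanSpace ℂ (Fin n)),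
      Matrix.toEuclideanLin M (Matrix.toEuclideanLin N x) =
        (WithLp.equiv 2 (Fin n → ℂ)).symm ((M * N) *ᵥ (WithLp.equiv 2 (Fin n → ℂ)) x) := by
    intro M N x
    rw [Matrix.toEuclideanLin_apply, Matrix.toEuclideanLin_apply]
    rw [WithLp.ofLp_toLp, Matrix.mulVec_mulVec]; rfl
  have hC : Commute (Matrix.toEuclideanLin A) (Matrix.toEuclideanLin B) := by
    rw [Commute, SemiconjBy]
    ext x : 1
    rw [Module.End.mul_apply, Module.End.mul_apply, key, key, hcomm]
  have hC' : Commute (Matrix.toEuclideanLin A) (Matrix.toEuclideanLin B) := hC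
  obtain ⟨b, μ, ν, hb⟩ := abstract_simdiag finrank_euclideanSpace_fin
    (Matrix.toEuclideanLin A) (Matrix.toEuclideanLin B) hsA hsB hC'
  set U : Matrix (Fin n) (Fin n) ℂ := Matrix.of (fun i j => b j i) with hUdef
  have hUU : Uᴴ * U = 1 := by
    have horm := orthonormal_iff_ite.mp b.orthonormal
    ext j k
    have hjk := horm j k
    rw [PiLp.inner_apply] at hjk
    simp only [RCLike.inner_apply] at hjk
    simp only [Matrix.mul_apply, Matrix.conjTranspose_apply, hUdef, Matrix.of_apply,
      Matrix.one_apply]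
    simpa [RCLike.star_def, mul_comm] using hjk
  have hUU' : U * Uᴴ = 1 := mul_eq_one_comm.mp hUU
  have hdiag : ∀ (M : Matrix (Fin n) (Fin n) ℂ) (μ : Fin n → ℂ),
      (∀ j, Matrix.toEuclideanLin M (b j) = μ j • b j) → M = U * diagonal μ * Uᴴ := by
    intro M μ hvec
    have hMU : M * U = U * diagonal μ := by
      ext i j
      have h1 := congrArg (fun v => (WithLp.equiv 2 (Fin n → ℂ)) v) (hvec j)
      change (M *ᵥ (WithLp.equiv 2 (Fin n → ℂ)) (b j)) = _ at h1
      have h2 := congrFun h1 i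
      simp only [Matrix.mul_apply, Matrix.mul_diagonal, hUdef, Matrix.of_apply]
      rw [show (∑ k, M i k * b j k) = (M *ᵥ (WithLp.equiv 2 (Fin n → ℂ)) (b j)) i from rfl]
      rw [h2]
      rw [Finset.sum_eq_single j (fun x _ hx => by simp [Matrix.diagonal_apply_ne μ hx]) (by simp)]
      simp [mul_comm]
    calc M = M * (U * Uᴴ) := by rw [hUU', Matrix.mul_one]
    _ = (M * U) * Uᴴ := by rw [Matrix.mul_assoc]
    _ = U * diagonal μ * Uᴴ := by rw [hMU]
  refine ⟨U, μ, ν, hUU, hUU', ?_, ?_⟩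
  · exact hdiag A μ (fun j => (hb j).1)
  · exact hdiag B ν (fun j => (hb j).2)


open Matrix

/-- Core scalar computation for a pair of indices. -/
lemma core_pair (Rmm Rll Rml Rlm xm xl ym yl c d : ℂ)
    (hdet : Rml * Rlm = Rmm * Rll)
    (e1 : xm - Rmm * xm - xm * Rmm + Rmm * c = 0)
    (e2 : xl - Rll * xl - xl * Rll + Rll * c = 0)
    (e3 : - (Rml * xl) - xm * Rml + Rml * c = 0)
    (f1 : ym - Rmm * ym - ym * Rmm + Rmm * d = 0)
    (f2 : yl - Rll * yl - yl * Rll + Rll * d = 0)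
    (f3 : - (Rml * yl) - ym * Rml + Rml * d = 0) :
    xm * yl = xl * ym := by
  by_cases hm : Rmm = 0
  · have hx : xm = 0 := by rw [hm] at e1; linear_combination e1
    have hy : ym = 0 := by rw [hm] at f1; linear_combination f1
    rw [hx, hy]; ring
  by_cases hl : Rll = 0
  · have hx : xl = 0 := by rw [hl] at e2; linear_combination e2
    have hy : yl = 0 := by rw [hl] at f2; linear_combination f2
    rw [hx, hy]; ring
  have hml : Rml ≠ 0 := by
    intro h; rw [h, zero_mul] at hdet; exact (mul_ne_zero hm hl) hdet.symm
  have hc : c = xm + xl := by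
    have := mul_left_cancel₀ hml (show Rml * c = Rml * (xm + xl) by linear_combination e3)
    exact this
  have hd : d = ym + yl := by
    have := mul_left_cancel₀ hml (show Rml * d = Rml * (ym + yl) by linear_combination f3)
    exact this
  subst hc hd
  have hxm : xm = Rmm * (xm - xl) := by linear_combination e1
  have hxl : xl = Rll * (xl - xm) := by linear_combination e2
  have hym : ym = Rmm * (ym - yl) := by linear_combination f1
  have hyl : yl = Rll * (yl - ym) := by linear_combination f2
  linear_combination yl * hxm + Rmm * (xm - xl) * hyl - ym * hxl - Rll * (xl - xm) * hym

/-- All 2×2 minors of a matrix of rank ≤ 1 vanish. -/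
lemma minors_of_rank_le_one {n : ℕ} (R : Matrix (Fin n) (Fin n) ℂ) (h : R.rank ≤ 1)
    (i j k l : Fin n) : R i j * R k l = R i l * R k j := by
  obtain ⟨g, hg⟩ := finrank_le_one_iff.mp h
  have hcol : ∀ j : Fin n, ∃ c : ℂ, (fun i => R i j) = c • (g : Fin n → ℂ) := by
    intro j
    have hmem : (fun i => R i j) ∈ LinearMap.range R.mulVecLin := by
      refine ⟨Pi.single j 1, ?_⟩
      simp [Matrix.mulVecLin_apply, Matrix.mulVec_single]; rfl
    obtain ⟨c, hc⟩ := hg ⟨_, hmem⟩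
    refine ⟨c, ?_⟩
    have := congrArg Subtype.val hc
    simpa using this.symm
  obtain ⟨cj, hcj⟩ := hcol j
  obtain ⟨cl, hcl⟩ := hcol l
  have h1 : R i j = cj * (g : Fin n → ℂ) i := congrFun hcj i
  have h2 : R k j = cj * (g : Fin n → ℂ) k := congrFun hcj k
  have h3 : R i l = cl * (g : Fin n → ℂ) i := congrFun hcl i
  have h4 : R k l = cl * (g : Fin n → ℂ) k := congrFun hcl k
  rw [h1, h2, h3, h4]; ring


open Matrix

lemma exists_good_triple {n : ℕ} (M : Matrix (Fin 3) (Fin n) ℂ)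
    (h : LinearIndependent ℂ M) :
    ∃ σ : Fin 3 → Fin n, Function.Injective σ ∧
      ∀ c : Fin 3 → ℂ, (∀ r, ∑ i, c i * M i (σ r) = 0) → c = 0 := by
  classical
  have hrank : M.rank = 3 := by simpa using h.rank_matrix
  have hspan3 : Module.finrank ℂ (Submodule.span ℂ (Set.range Mᵀ)) = 3 := by
    have := Matrix.rank_eq_finrank_span_cols M; rw [hrank] at this; exact this.symm
  obtain ⟨s, hs_sub, hs_span, hs_ind⟩ := exists_linearIndependent ℂ (Set.range Mᵀ)
  have hsfin : s.Finite := hs_ind.setFinite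
  haveI := hsfin.fintype
  have hcard : s.toFinset.card = 3 := by
    have := finrank_span_set_eq_card hs_ind
    rw [hs_span, hspan3] at this
    exact this.symm
  have hcard' : Fintype.card s = 3 := by rw [← Set.toFinset_card]; exact hcard
  let e : Fin 3 ≃ s := (Fintype.equivFinOfCardEq hcard').symm
  have hchoose : ∀ r : Fin 3, ∃ j : Fin n, Mᵀ j = (e r : Fin 3 → ℂ) := fun r => hs_sub (e r).2
  let σ : Fin 3 → Fin n := fun r => (hchoose r).choose
  have hσ : ∀ r, Mᵀ (σ r) = (e r : Fin 3 → ℂ) := fun r => (hchoose r).choose_spec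
  have hstop : Submodule.span ℂ s = ⊤ := by
    apply Submodule.eq_top_of_finrank_eq
    rw [finrank_span_set_eq_card hs_ind, hcard]
    simp [Module.finrank_pi]
  refine ⟨σ, ?_, ?_⟩
  · intro r r' hrr
    have : (e r : Fin 3 → ℂ) = (e r' : Fin 3 → ℂ) := by rw [← hσ r, ← hσ r', hrr]
    exact e.injective (Subtype.ext this)
  · intro c hc
    let f : (Fin 3 → ℂ) →ₗ[ℂ] ℂ := ∑ i, c i • LinearMap.proj i
    have hf : ∀ v : Fin 3 → ℂ, f v = ∑ i, c i * v i := by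
      intro v
      simp [f, LinearMap.sum_apply, LinearMap.proj_apply]
    have hf0 : f = 0 := by
      apply LinearMap.ext_on hstop
      intro v hv
      have hr : Mᵀ (σ (e.symm ⟨v, hv⟩)) = v := by rw [hσ]; simp
      rw [LinearMap.zero_apply, hf]
      have h2 : ∀ i, M i (σ (e.symm ⟨v, hv⟩)) = v i := fun i => congrFun hr i
      exact (Finset.sum_congr rfl fun i _ => by rw [h2 i]).trans (hc (e.symm ⟨v, hv⟩))
    funext i
    have : f (Pi.single i 1) = 0 := by rw [hf0]; rfl
    rw [hf] at this
    rw [Finset.sum_eq_single i (fun x _ hx => by simp [Pi.single_eq_of_ne hx]) (by simp)] at this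
    simpa using this


open Matrix

lemma rank_sub_le_one {n : ℕ} (E P : Matrix (Fin n) (Fin n) ℂ)
    (hE2 : E * E = E) (hEP : E * P = P) (hPE : P * E = P) (hP2 : P * P = P)
    (hE : E.rank = 3) (hP : P.rank = 2) : (E - P).rank ≤ 1 := by
  classical
  set W1 := LinearMap.range P.mulVecLin with hW1
  set W2 := LinearMap.range (E - P).mulVecLin with hW2
  set WE := LinearMap.range E.mulVecLin with hWE
  have hPEP : P * (E - P) = 0 := by rw [Matrix.mul_sub, hPE, hP2, sub_self]
  have hEEP : E * (E - P) = E - P := by rw [Matrix.mul_sub, hE2, hEP]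
  have h12 : W1 ⊓ W2 = ⊥ := by
    rw [Submodule.eq_bot_iff]
    rintro x hx
    obtain ⟨⟨u, hu⟩, ⟨w, hw⟩⟩ := Submodule.mem_inf.mp hx
    simp only [Matrix.mulVecLin_apply] at hu hw
    have h1 : P *ᵥ x = x := by rw [← hu, Matrix.mulVec_mulVec, hP2]
    have h2 : P *ᵥ x = 0 := by rw [← hw, Matrix.mulVec_mulVec, hPEP, Matrix.zero_mulVec]
    rw [← h1, h2]
  have hsup : W1 ⊔ W2 ≤ WE := by
    apply sup_le
    · rintro x ⟨u, rfl⟩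
      exact ⟨P *ᵥ u, by simp only [Matrix.mulVecLin_apply, Matrix.mulVec_mulVec, hEP]⟩
    · rintro x ⟨u, rfl⟩
      exact ⟨(E - P) *ᵥ u, by simp only [Matrix.mulVecLin_apply, Matrix.mulVec_mulVec, hEEP]⟩
  have hdim : Module.finrank ℂ W1 + Module.finrank ℂ W2 =
      Module.finrank ℂ ↥(W1 ⊔ W2) := by
    rw [← Submodule.finrank_sup_add_finrank_inf_eq, h12, finrank_bot, add_zero]
  have hle : Module.finrank ℂ ↥(W1 ⊔ W2) ≤ Module.finrank ℂ WE :=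
    Submodule.finrank_mono hsup
  have e1 : Module.finrank ℂ W1 = 2 := hP
  have e2 : Module.finrank ℂ WE = 3 := hE
  have e3 : (E - P).rank = Module.finrank ℂ W2 := rfl
  omega


/-- An operator system containing two commuting Hermitian matrices `A`, `B` such that
`I`, `A`, `B` are linearly independent is not strongly triangle-free. -/
theorem not_stronglyTriangleFree_of_commuting {n : ℕ}
    (V : Submodule ℂ (Matrix (Fin n) (Fin n) ℂ))
    (h1 : (1 : Matrix (Fin n) (Fin n) ℂ) ∈ V)
    (hstar : ∀ A ∈ V, Aᴴ ∈ V)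
    (A B : Matrix (Fin n) (Fin n) ℂ) (hA : A ∈ V) (hB : B ∈ V)
    (hAh : A.IsHermitian) (hBh : B.IsHermitian)
    (hcomm : A * B = B * A)
    (hind : LinearIndependent ℂ ![(1 : Matrix (Fin n) (Fin n) ℂ), A, B]) :
    ¬ StronglyTriangleFree (V : Set (Matrix (Fin n) (Fin n) ℂ)) := by
  classical
  intro hstf
  obtain ⟨U, μ, ν, hUU, hUU', hAeq, hBeq⟩ := simdiag A B hAh hBh hcomm
  have canc1 : ∀ Z : Matrix (Fin n) (Fin n) ℂ, U * (Uᴴ * Z) = Z := fun Z => by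
    rw [← Matrix.mul_assoc, hUU', Matrix.one_mul]
  have canc2 : ∀ Z : Matrix (Fin n) (Fin n) ℂ, Uᴴ * (U * Z) = Z := fun Z => by
    rw [← Matrix.mul_assoc, hUU, Matrix.one_mul]
  have conj : ∀ X Y : Matrix (Fin n) (Fin n) ℂ,
      (Uᴴ * X * U) * (Uᴴ * Y * U) = Uᴴ * (X * Y) * U := by
    intro X Y
    simp only [Matrix.mul_assoc]
    rw [canc1]
  have unconj : ∀ D : Matrix (Fin n) (Fin n) ℂ, Uᴴ * (U * D * Uᴴ) * U = D := by
    intro D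
    simp only [Matrix.mul_assoc]
    rw [hUU, Matrix.mul_one, canc2]
  -- linear independence of the diagonal data
  set M : Matrix (Fin 3) (Fin n) ℂ := Matrix.of ![(fun _ => 1), μ, ν] with hM
  have hMind : LinearIndependent ℂ M := by
    refine Fintype.linearIndependent_iff.mpr ?_
    intro g hg
    have hvec : ∀ j, g 0 + g 1 * μ j + g 2 * ν j = 0 := by
      intro j
      have := congrFun hg j
      simpa [hM, Fin.sum_univ_three] using this
    have hdec : diagonal (fun j => g 0 + g 1 * μ j + g 2 * ν j) =
        g 0 • diagonal (fun _ : Fin n => (1:ℂ)) + g 1 • diagonal μ + g 2 • diagonal ν := by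
      ext i j
      rcases eq_or_ne i j with rfl | hij
      · simp [Matrix.diagonal_apply_eq]
      · simp [Matrix.diagonal_apply_ne _ hij, Matrix.one_apply_ne hij]
    have hcomb : g 0 • (1 : Matrix (Fin n) (Fin n) ℂ) + g 1 • A + g 2 • B = 0 := by
      have h1m : (1 : Matrix (Fin n) (Fin n) ℂ) = U * diagonal (fun _ : Fin n => (1:ℂ)) * Uᴴ := by
        rw [Matrix.diagonal_one, Matrix.mul_one, hUU']
      have hexp : ∀ (D : Matrix (Fin n) (Fin n) ℂ) (c : ℂ),
          c • (U * D * Uᴴ) = U * (c • D) * Uᴴ := by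
        intro D c
        rw [Matrix.mul_smul, Matrix.smul_mul]
      rw [hAeq, hBeq, h1m, hexp, hexp, hexp, ← Matrix.add_mul, ← Matrix.add_mul,
        ← Matrix.mul_add, ← Matrix.mul_add, ← hdec,
        show (fun j => g 0 + g 1 * μ j + g 2 * ν j) = (fun _ => (0:ℂ)) from funext hvec]
      simp
    have hz := Fintype.linearIndependent_iff.mp hind g (by
      rw [Fin.sum_univ_three]
      simpa using hcomb)
    exact hz
  obtain ⟨σ, hσinj, hσprop⟩ := exists_good_triple M hMind
  -- the rank-3 projection
  set e : Fin n → ℂ := fun i => if i ∈ Set.range σ then 1 else 0 with he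
  have he2 : ∀ i, e i * e i = e i := by
    intro i; simp only [he]; split <;> simp
  have heσ : ∀ r, e (σ r) = 1 := by
    intro r; simp only [he]; rw [if_pos ⟨r, rfl⟩]
  set E : Matrix (Fin n) (Fin n) ℂ := diagonal e with hE
  have hE2 : E * E = E := by
    rw [hE, Matrix.diagonal_mul_diagonal]
    exact congrArg _ (funext he2)
  have hse : star e = e := by
    funext i
    simp only [he, Pi.star_apply]
    split <;> simp
  have hEH : Eᴴ = E := by
    rw [hE, Matrix.diagonal_conjTranspose, hse]
  have hrE : E.rank = 3 := by
    rw [hE, Matrix.rank_diagonal]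
    have hiff : ∀ i, e i ≠ 0 ↔ i ∈ Set.range σ := by
      intro i; simp only [he]; split <;> simp_all
    rw [Fintype.card_congr (Equiv.subtypeEquivRight hiff)]
    rw [show Fintype.card {i // i ∈ Set.range σ} = Fintype.card (Set.range σ) from rfl]
    rw [Set.card_range_of_injective hσinj, Fintype.card_fin]
  set Q : Matrix (Fin n) (Fin n) ℂ := U * E * Uᴴ with hQ
  have hQH : Qᴴ = Q := by
    rw [hQ, Matrix.conjTranspose_mul, Matrix.conjTranspose_mul, Matrix.conjTranspose_conjTranspose,
      hEH, Matrix.mul_assoc]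
  have hQ2 : Q * Q = Q := by
    rw [hQ]
    simp only [Matrix.mul_assoc]
    rw [canc2, show E * (E * Uᴴ) = E * Uᴴ from by rw [← Matrix.mul_assoc, hE2]]
  have hdetU : IsUnit U.det := by
    apply IsUnit.of_mul_eq_one (Uᴴ.det)
    rw [← Matrix.det_mul, hUU', Matrix.det_one]
  have hdetUH : IsUnit Uᴴ.det := by
    apply IsUnit.of_mul_eq_one (U.det)
    rw [← Matrix.det_mul, hUU, Matrix.det_one]
  have hrQ : Q.rank = 3 := by
    rw [hQ, Matrix.rank_mul_eq_left_of_isUnit_det Uᴴ (U * E) hdetUH,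
      Matrix.rank_mul_eq_right_of_isUnit_det U E hdetU]
    exact hrE
  -- apply strong triangle-freeness
  obtain ⟨P, ⟨⟨hPH, hP2⟩, hPrank, hPanti⟩, hPQ, hQP⟩ := hstf Q ⟨hQH, hQ2⟩ hrQ
  set P' : Matrix (Fin n) (Fin n) ℂ := Uᴴ * P * U with hP'
  have hP'2 : P' * P' = P' := by rw [hP', conj, hP2]
  have hEQ : E = Uᴴ * Q * U := by rw [hQ, unconj]
  have hEP' : E * P' = P' := by rw [hEQ, hP', conj, hQP]
  have hP'E : P' * E = P' := by rw [hEQ, hP', conj, hPQ]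
  have hrP' : P'.rank = 2 := by
    rw [hP', Matrix.rank_mul_eq_left_of_isUnit_det U (Uᴴ * P) hdetU,
      Matrix.rank_mul_eq_right_of_isUnit_det Uᴴ P hdetUH]
    exact hPrank
  set R : Matrix (Fin n) (Fin n) ℂ := E - P' with hRdef
  have hrankR : R.rank ≤ 1 := rank_sub_le_one E P' hE2 hEP' hP'E hP'2 hrE hrP'
  have hmin : ∀ i j k l, R i j * R k l = R i l * R k j := minors_of_rank_le_one R hrankR
  have hP'ER : P' = E - R := by rw [hRdef, sub_sub_cancel]
  -- anticlique scalars
  obtain ⟨α, hα⟩ := hPanti A hA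
  obtain ⟨β, hβ⟩ := hPanti B hB
  -- main entrywise identity
  have main : ∀ (T : Matrix (Fin n) (Fin n) ℂ) (μT : Fin n → ℂ) (γ : ℂ),
      T = U * diagonal μT * Uᴴ → P * T * P = γ • P → ∀ m l,
      diagonal (fun i => e i * (μT i - γ)) m l
        - R m l * (e l * (μT l - γ)) - (e m * (μT m - γ)) * R m l
        + R m l * (∑ r, R r r * (e r * (μT r - γ))) = 0 := by
    intro T μT γ hT hscal m l
    set x : Fin n → ℂ := fun i => e i * (μT i - γ) with hx
    have hDT : diagonal μT = Uᴴ * T * U := by rw [hT, unconj]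
    have h1 : P' * diagonal μT * P' = γ • P' := by
      rw [hDT, hP', conj, show Uᴴ * (P * T) * U * (Uᴴ * P * U) = Uᴴ * (P * T * P) * U from
        conj (P * T) P, hscal]
      simp only [Matrix.mul_smul, Matrix.smul_mul]
    have hX0 : diagonal x = E * diagonal μT * E - γ • E := by
      rw [hE, Matrix.diagonal_mul_diagonal, Matrix.diagonal_mul_diagonal]
      ext i j
      rcases eq_or_ne i j with rfl | hij
      · simp only [Matrix.sub_apply, Matrix.smul_apply, Matrix.diagonal_apply_eq,
          Pi.mul_apply, smul_eq_mul, hx]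
        linear_combination (-(μT i)) * he2 i
      · simp [Matrix.sub_apply, Matrix.smul_apply, Matrix.diagonal_apply_ne _ hij]
    have h2 : P' * diagonal x * P' = 0 := by
      rw [hX0, Matrix.mul_sub, Matrix.sub_mul,
        show P' * (E * diagonal μT * E) = P' * diagonal μT * E from by
          rw [show P' * (E * diagonal μT * E) = (P' * E) * diagonal μT * E from by
            simp only [Matrix.mul_assoc], hP'E],
        show P' * diagonal μT * E * P' = P' * diagonal μT * P' from by
          rw [Matrix.mul_assoc (P' * diagonal μT), hEP'],
        h1, Matrix.mul_smul, Matrix.smul_mul,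
        show P' * E * P' = P' from by rw [hP'E, hP'2]]
      exact sub_self _
    have hEX : E * diagonal x = diagonal x := by
      rw [hE, Matrix.diagonal_mul_diagonal]
      ext i j
      rcases eq_or_ne i j with rfl | hij
      · simp only [Matrix.diagonal_apply_eq, Pi.mul_apply, hx]
        linear_combination (μT i - γ) * he2 i
      · simp [Matrix.diagonal_apply_ne _ hij]
    have hXE : diagonal x * E = diagonal x := by
      rw [hE, Matrix.diagonal_mul_diagonal]
      ext i j
      rcases eq_or_ne i j with rfl | hij
      · simp only [Matrix.diagonal_apply_eq, Pi.mul_apply, hx]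
        linear_combination (μT i - γ) * he2 i
      · simp [Matrix.diagonal_apply_ne _ hij]
    have h3 : diagonal x - R * diagonal x - diagonal x * R + R * diagonal x * R = 0 := by
      have h4 : (E - R) * diagonal x * (E - R) = 0 := by rw [← hP'ER]; exact h2
      simp only [Matrix.sub_mul, Matrix.mul_sub] at h4
      rw [hEX, hXE, show R * diagonal x * E = R * diagonal x from by
        rw [Matrix.mul_assoc, hXE]] at h4
      rw [← h4]
      abel
    have h6 : (R * diagonal x * R) m l = R m l * (∑ r, R r r * x r) := by
      rw [Matrix.mul_apply, Finset.mul_sum]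
      apply Finset.sum_congr rfl
      intro r _
      rw [Matrix.mul_diagonal]
      calc R m r * x r * R r l = (R m r * R r l) * x r := by ring
        _ = (R m l * R r r) * x r := by rw [hmin m r r l]
        _ = R m l * (R r r * x r) := by ring
    have h7 := congrFun (congrFun h3 m) l
    simp only [Matrix.sub_apply, Matrix.add_apply, Matrix.zero_apply] at h7
    rw [Matrix.mul_diagonal, Matrix.diagonal_mul, h6] at h7
    exact h7
  have hmA := main A μ α hAeq hα
  have hmB := main B ν β hBeq hβ
  -- pairwise proportionality
  have hxy : ∀ m l, (e m * (μ m - α)) * (e l * (ν l - β))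
      = (e l * (μ l - α)) * (e m * (ν m - β)) := by
    intro m l
    rcases eq_or_ne m l with rfl | hml
    · ring
    · have e1 := hmA m m; rw [Matrix.diagonal_apply_eq] at e1
      have e2 := hmA l l; rw [Matrix.diagonal_apply_eq] at e2
      have e3 := hmA m l; rw [Matrix.diagonal_apply_ne _ hml] at e3
      have f1 := hmB m m; rw [Matrix.diagonal_apply_eq] at f1
      have f2 := hmB l l; rw [Matrix.diagonal_apply_eq] at f2
      have f3 := hmB m l; rw [Matrix.diagonal_apply_ne _ hml] at f3
      exact core_pair (R m m) (R l l) (R m l) (R l m) _ _ _ _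
        (∑ r, R r r * (e r * (μ r - α))) (∑ r, R r r * (e r * (ν r - β)))
        (hmin m l l m)
        (by linear_combination e1) (by linear_combination e2) (by linear_combination e3)
        (by linear_combination f1) (by linear_combination f2) (by linear_combination f3)
  -- conclude
  have hM0 : ∀ j, M 0 j = 1 := fun j => by simp [hM]
  have hM1 : ∀ j, M 1 j = μ j := fun j => by simp [hM]
  have hM2 : ∀ j, M 2 j = ν j := fun j => by simp [hM]
  by_cases hx0 : ∀ r, μ (σ r) - α = 0
  · have hc := hσprop ![-α, 1, 0] (by
      intro r
      rw [Fin.sum_univ_three, hM0, hM1, hM2]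
      simp only [Matrix.cons_val_zero, Matrix.cons_val_one, Matrix.head_cons]
      have h9 := hx0 r
      simp only [Matrix.cons_val_fin_one, Matrix.cons_val_two, Matrix.tail_cons, Matrix.head_cons]
      linear_combination h9)
    have := congrFun hc 1
    simp at this
  · push_neg at hx0
    obtain ⟨r0, hr0⟩ := hx0
    set t : ℂ := (ν (σ r0) - β) / (μ (σ r0) - α) with ht
    have hyr : ∀ r, ν (σ r) - β = t * (μ (σ r) - α) := by
      intro r
      have h := hxy (σ r0) (σ r)
      rw [heσ, heσ] at h
      simp only [one_mul] at h
      rw [ht]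
      field_simp
      linear_combination h
    have hc := hσprop ![t * α - β, -t, 1] (by
      intro r
      rw [Fin.sum_univ_three, hM0, hM1, hM2]
      simp only [Matrix.cons_val_zero, Matrix.cons_val_one, Matrix.head_cons,
        Matrix.cons_val_two, Matrix.tail_cons]
      linear_combination hyr r)
    have := congrFun hc 2
    simp at this
end

section
/- For every k ≥ 1, the diagonal operator system D_{k²} ⊆ M_{k²}(ℂ) has a k-clique: there exists a rank k orthogonal projection P ∈ M_{k²}(ℂ) such that dim(P D_{k²} P) = k². -/
open Matrix

namespace DiagCliqueAux

/-- identification of `Fin (k^2)` with `Fin k × Fin k`. -/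
def e (k : ℕ) : Fin (k ^ 2) ≃ Fin k × Fin k := (finCongr (by ring)).trans finProdFinEquiv.symm

/-- The `k² × k` matrix whose columns are the vectors `v_i(a,b) = δ_{ai} + (1+i)δ_{bi}`. -/
def Vm (k : ℕ) : Matrix (Fin (k ^ 2)) (Fin k) ℂ :=
  Matrix.of fun m i =>
    (if (e k m).1 = i then 1 else 0) + (if (e k m).2 = i then 1 + Complex.I else 0)

lemma Vm_star (k : ℕ) (m : Fin (k ^ 2)) (i : Fin k) :
    star (Vm k m i) =
      (if (e k m).1 = i then 1 else 0) + (if (e k m).2 = i then 1 - Complex.I else 0) := by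
  simp only [Vm, Matrix.of_apply, star_add, apply_ite (star : ℂ → ℂ), star_one, star_zero]
  congr 1
  split <;> simp [Complex.ext_iff]

/-- The all-ones matrix. -/
def Jm (k : ℕ) : Matrix (Fin k) (Fin k) ℂ := Matrix.of fun _ _ => 1

/-- The Gram matrix of the columns of `Vm`. -/
def G (k : ℕ) : Matrix (Fin k) (Fin k) ℂ := (3 * k : ℂ) • 1 + (2 : ℂ) • Jm k

/-- The inverse of the Gram matrix. -/
noncomputable def Hm (k : ℕ) : Matrix (Fin k) (Fin k) ℂ :=
  ((3 * (k : ℂ))⁻¹) • 1 - (2 / (15 * (k : ℂ) ^ 2)) • Jm k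

lemma hG (k : ℕ) : (Vm k)ᴴ * Vm k = G k := by
  ext i j
  rw [Matrix.mul_apply]
  rw [← Equiv.sum_comp (e k).symm (fun m => (Vm k)ᴴ i m * Vm k m j)]
  simp only [conjTranspose_apply, Vm_star]
  simp only [Vm, Matrix.of_apply, Equiv.apply_symm_apply]
  rw [Fintype.sum_prod_type]
  simp only [add_mul, mul_add]
  simp only [Finset.sum_add_distrib]
  simp only [ite_mul, mul_ite, zero_mul, mul_zero, one_mul, mul_one]
  simp only [Finset.sum_ite_irrel, Finset.sum_const_zero, Finset.sum_ite_eq',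
    Finset.mem_univ, if_true, Finset.sum_const, Finset.card_univ, Fintype.card_fin,
    nsmul_eq_mul, smul_eq_mul]
  by_cases h : j = i
  · subst h
    simp only [if_true, G, Jm, Matrix.add_apply, Matrix.smul_apply, Matrix.one_apply_eq,
      Matrix.of_apply, smul_eq_mul, mul_one, Finset.sum_const, Finset.card_univ,
      Fintype.card_fin, nsmul_eq_mul]
    linear_combination (-(k : ℂ)) * Complex.I_sq
  · simp only [if_neg h, G, Jm, Matrix.add_apply, Matrix.smul_apply, Matrix.of_apply,
      Matrix.one_apply_ne (Ne.symm h), smul_eq_mul, mul_one, mul_zero,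
      Finset.sum_const_zero]
    ring

lemma hGH (k : ℕ) (hk : 1 ≤ k) : G k * Hm k = 1 := by
  have hk0 : (k : ℂ) ≠ 0 := Nat.cast_ne_zero.mpr (by omega)
  ext i j
  rw [Matrix.mul_apply]
  simp only [G, Hm, Jm, Matrix.add_apply, Matrix.sub_apply, Matrix.smul_apply,
    Matrix.of_apply, smul_eq_mul, mul_one, Matrix.one_apply]
  simp only [add_mul, mul_sub, sub_mul, mul_ite, ite_mul, mul_zero, zero_mul, mul_one, one_mul]
  simp only [Finset.sum_sub_distrib, Finset.sum_add_distrib, Finset.sum_ite_irrel,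
    Finset.sum_const_zero, Finset.sum_ite_eq, Finset.sum_ite_eq', Finset.mem_univ, if_true,
    Finset.sum_const, Finset.card_univ, Fintype.card_fin, nsmul_eq_mul]
  by_cases h : i = j <;> simp only [h, if_true, if_neg, reduceIte] <;> field_simp <;>
    ring_nf <;> simp [← mul_pow, mul_inv_cancel₀ hk0, mul_inv_cancel₀ (pow_ne_zero 5 hk0)]

lemma hHG (k : ℕ) (hk : 1 ≤ k) : Hm k * G k = 1 := by
  have hk0 : (k : ℂ) ≠ 0 := Nat.cast_ne_zero.mpr (by omega)
  ext i j
  rw [Matrix.mul_apply]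
  simp only [G, Hm, Jm, Matrix.add_apply, Matrix.sub_apply, Matrix.smul_apply,
    Matrix.of_apply, smul_eq_mul, mul_one, Matrix.one_apply]
  simp only [add_mul, mul_add, mul_sub, sub_mul, mul_ite, ite_mul, mul_zero, zero_mul,
    mul_one, one_mul]
  simp only [Finset.sum_sub_distrib, Finset.sum_add_distrib, Finset.sum_ite_irrel,
    Finset.sum_const_zero, Finset.sum_ite_eq, Finset.sum_ite_eq', Finset.mem_univ, if_true,
    Finset.sum_const, Finset.card_univ, Fintype.card_fin, nsmul_eq_mul]
  by_cases h : i = j <;> simp only [h, if_true, if_neg, reduceIte] <;> field_simp <;>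
    ring_nf <;> simp [← mul_pow, mul_inv_cancel₀ hk0, mul_inv_cancel₀ (pow_ne_zero 5 hk0)]

lemma hHherm (k : ℕ) : (Hm k)ᴴ = Hm k := by
  ext i j
  simp only [Hm, Jm, conjTranspose_apply, Matrix.sub_apply, Matrix.smul_apply,
    Matrix.of_apply, smul_eq_mul, mul_one, star_sub, star_mul', star_inv₀]
  by_cases h : j = i
  · subst h
    simp [Matrix.one_apply_eq, Complex.ext_iff]
  · simp [Matrix.one_apply_ne (Ne.symm h), Matrix.one_apply_ne h, Complex.ext_iff]

/-- The projection. -/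
noncomputable def P (k : ℕ) : Matrix (Fin (k ^ 2)) (Fin (k ^ 2)) ℂ :=
  Vm k * Hm k * (Vm k)ᴴ

lemma hPherm (k : ℕ) : (P k).IsHermitian := by
  unfold Matrix.IsHermitian
  rw [P, conjTranspose_mul, conjTranspose_mul, conjTranspose_conjTranspose, hHherm,
    Matrix.mul_assoc]

lemma hPV (k : ℕ) (hk : 1 ≤ k) : P k * Vm k = Vm k := by
  have h1 : P k * Vm k = Vm k * (Hm k * ((Vm k)ᴴ * Vm k)) := by rw [P]; simp only [Matrix.mul_assoc]
  rw [h1, hG, hHG k hk, Matrix.mul_one]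

lemma hVP (k : ℕ) (hk : 1 ≤ k) : (Vm k)ᴴ * P k = (Vm k)ᴴ := by
  have h1 := congrArg conjTranspose (hPV k hk)
  rwa [conjTranspose_mul, hPherm k] at h1

lemma hPP (k : ℕ) (hk : 1 ≤ k) : P k * P k = P k := by
  have h1 : P k * P k = P k * Vm k * (Hm k * (Vm k)ᴴ) := by
    rw [P]; simp only [Matrix.mul_assoc]
  rw [h1, hPV k hk, P, Matrix.mul_assoc]

lemma hrankV (k : ℕ) (hk : 1 ≤ k) : (Vm k).rank = k := by
  refine le_antisymm (le_trans (Matrix.rank_le_card_width _) (by simp)) ?_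
  have h1 : ((1 : Matrix (Fin k) (Fin k) ℂ)).rank = k := by
    rw [Matrix.rank_one, Fintype.card_fin]
  calc k = ((1 : Matrix (Fin k) (Fin k) ℂ)).rank := h1.symm
    _ = (((Vm k)ᴴ * Vm k) * Hm k).rank := by rw [hG, hGH k hk]
    _ ≤ ((Vm k)ᴴ * Vm k).rank := Matrix.rank_mul_le_left _ _
    _ ≤ (Vm k).rank := Matrix.rank_mul_le_right _ _

lemma hrankP (k : ℕ) (hk : 1 ≤ k) : (P k).rank = k := by
  refine le_antisymm ?_ ?_
  · calc (P k).rank = (Vm k * (Hm k * (Vm k)ᴴ)).rank := by rw [P, Matrix.mul_assoc]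
      _ ≤ (Vm k).rank := Matrix.rank_mul_le_left _ _
      _ = k := hrankV k hk
  · calc k = (Vm k).rank := (hrankV k hk).symm
      _ = (P k * Vm k).rank := by rw [hPV k hk]
      _ ≤ (P k).rank := Matrix.rank_mul_le_left _ _

/-- the key injectivity: compression of diagonal kills only zero. -/
lemma key_inj (k : ℕ) (hk : 1 ≤ k) (d : Fin (k ^ 2) → ℂ)
    (h : P k * Matrix.diagonal d * P k = 0) : d = 0 := by
  have h2 : (Vm k)ᴴ * Matrix.diagonal d * Vm k = 0 := by
    have e1 : ((Vm k)ᴴ * P k) * Matrix.diagonal d * (P k * Vm k)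
        = (Vm k)ᴴ * (P k * Matrix.diagonal d * P k) * Vm k := by
      simp only [Matrix.mul_assoc]
    rw [hVP k hk, hPV k hk] at e1
    rw [e1, h, Matrix.mul_zero, Matrix.zero_mul]
  have heq : ∀ i j : Fin k,
      (∑ a : Fin k, ∑ b : Fin k,
        (((if a = i then 1 else 0) + (if b = i then 1 - Complex.I else 0))
            * d ((e k).symm (a, b))) *
        ((if a = j then 1 else 0) + (if b = j then 1 + Complex.I else 0))) = 0 := by
    intro i j
    have hcomp : ((Vm k)ᴴ * Matrix.diagonal d * Vm k) i j =
        (∑ a : Fin k, ∑ b : Fin k,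
          (((if a = i then 1 else 0) + (if b = i then 1 - Complex.I else 0))
              * d ((e k).symm (a, b))) *
          ((if a = j then 1 else 0) + (if b = j then 1 + Complex.I else 0))) := by
      rw [Matrix.mul_apply]
      rw [← Equiv.sum_comp (e k).symm
        (fun m => ((Vm k)ᴴ * Matrix.diagonal d) i m * Vm k m j)]
      rw [Fintype.sum_prod_type]
      refine Finset.sum_congr rfl fun a _ => Finset.sum_congr rfl fun b _ => ?_
      rw [Matrix.mul_diagonal, conjTranspose_apply, Vm_star]
      simp [Vm, Equiv.apply_symm_apply]
    rw [h2, Matrix.zero_apply] at hcomp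
    exact hcomp.symm
  have hod : ∀ i j : Fin k, i ≠ j → d ((e k).symm (i, j)) = 0 := by
    intro i j hij
    have h1 := heq i j
    have h2' := heq j i
    simp only [add_mul, mul_add, ite_mul, mul_ite, zero_mul, mul_zero, one_mul, mul_one,
      Finset.sum_add_distrib, Finset.sum_ite_irrel, Finset.sum_const_zero, Finset.sum_ite_eq,
      Finset.sum_ite_eq', Finset.mem_univ, if_true, if_neg hij, if_neg (Ne.symm hij)]
      at h1 h2'
    linear_combination ((1 - Complex.I)/4) * h1 + ((1 + Complex.I)/4) * h2' +
      ((d ((e k).symm (i, j)) + d ((e k).symm (j, i)))/4 +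
        (d ((e k).symm (i, j)) - 3 * d ((e k).symm (j, i)))/4) * Complex.I_sq
  have hdd : ∀ i : Fin k, d ((e k).symm (i, i)) = 0 := by
    intro i
    have h1 := heq i i
    simp only [add_mul, mul_add, ite_mul, mul_ite, zero_mul, mul_zero, one_mul, mul_one,
      Finset.sum_add_distrib, Finset.sum_ite_irrel, Finset.sum_const_zero, Finset.sum_ite_eq,
      Finset.sum_ite_eq', Finset.mem_univ, if_true] at h1
    have s1 : ∑ x : Fin k, d ((e k).symm (i, x)) = d ((e k).symm (i, i)) := by
      refine Finset.sum_eq_single_of_mem i (Finset.mem_univ i) fun b _ hb => ?_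
      exact hod i b (Ne.symm hb)
    have s2 : ∑ x : Fin k, (1 - Complex.I) * d ((e k).symm (x, i))
        = (1 - Complex.I) * d ((e k).symm (i, i)) := by
      refine Finset.sum_eq_single_of_mem i (Finset.mem_univ i) fun b _ hb => ?_
      rw [hod b i hb, mul_zero]
    have s3 : ∑ x : Fin k, (1 - Complex.I) * d ((e k).symm (x, i)) * Complex.I
        = (1 - Complex.I) * d ((e k).symm (i, i)) * Complex.I := by
      refine Finset.sum_eq_single_of_mem i (Finset.mem_univ i) fun b _ hb => ?_
      rw [hod b i hb, mul_zero, zero_mul]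
    rw [s1, s2, s3] at h1
    linear_combination h1/5 + (d ((e k).symm (i, i)))/5 * Complex.I_sq
  funext m
  have hm : d m = d ((e k).symm ((e k m).1, (e k m).2)) := by
    rw [Prod.mk.eta, Equiv.symm_apply_apply]
  rcases eq_or_ne (e k m).1 (e k m).2 with hab | hab
  · rw [← hab] at hm
    rw [hm]
    exact hdd _
  · rw [hm]
    exact hod _ _ hab

/-- The compression map on diagonal coefficients, as a linear map. -/
noncomputable def g (k : ℕ) : (Fin (k ^ 2) → ℂ) →ₗ[ℂ] Matrix (Fin (k ^ 2)) (Fin (k ^ 2)) ℂ where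
  toFun d := P k * Matrix.diagonal d * P k
  map_add' a b := by
    rw [show Matrix.diagonal (a + b) = Matrix.diagonal a + Matrix.diagonal b from
      (Matrix.diagonal_add a b).symm, Matrix.mul_add, Matrix.add_mul]
  map_smul' c a := by
    rw [show Matrix.diagonal (c • a) = c • Matrix.diagonal a from
      (Matrix.diagonal_smul c a), Matrix.mul_smul, Matrix.smul_mul, RingHom.id_apply]

lemma hrange (k : ℕ) :
    compressionSpace { M : Matrix (Fin (k ^ 2)) (Fin (k ^ 2)) ℂ | M.IsDiag } (P k)
      = LinearMap.range (g k) := by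
  unfold compressionSpace
  have hset : ((fun A => P k * A * P k) '' { M : Matrix (Fin (k ^ 2)) (Fin (k ^ 2)) ℂ | M.IsDiag })
      = Set.range ⇑(g k) := by
    ext X
    constructor
    · rintro ⟨A, hA, rfl⟩
      exact ⟨A.diag, by simp only [g, LinearMap.coe_mk, AddHom.coe_mk,
        Matrix.IsDiag.diagonal_diag hA]⟩
    · rintro ⟨d0, rfl⟩
      exact ⟨Matrix.diagonal d0, Matrix.isDiag_diagonal d0, rfl⟩
  rw [hset, ← LinearMap.coe_range, Submodule.span_eq]

lemma hinj (k : ℕ) (hk : 1 ≤ k) : Function.Injective ⇑(g k) := by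
  apply LinearMap.ker_eq_bot.mp
  refine (Submodule.eq_bot_iff _).mpr fun d hd => ?_
  exact key_inj k hk d (LinearMap.mem_ker.mp hd)

end DiagCliqueAux

/-- For every `k ≥ 1`, the diagonal operator system `D_{k²} ⊆ M_{k²}(ℂ)` has a
`k`-clique. -/
theorem diagonal_has_k_clique (k : ℕ) (hk : 1 ≤ k) :
    ∃ P : Matrix (Fin (k ^ 2)) (Fin (k ^ 2)) ℂ,
      IsClique { M : Matrix (Fin (k ^ 2)) (Fin (k ^ 2)) ℂ | M.IsDiag } k P := by
  refine ⟨DiagCliqueAux.P k, ⟨DiagCliqueAux.hPherm k, DiagCliqueAux.hPP k hk⟩,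
    DiagCliqueAux.hrankP k hk, ?_⟩
  rw [DiagCliqueAux.hrange k,
    LinearMap.finrank_range_of_inj (DiagCliqueAux.hinj k hk),
    Module.finrank_fintype_fun_eq_card, Fintype.card_fin]
end

section
/- The diagonal operator system D_n ⊆ M_n(ℂ) is strongly triangle-free if and only if n ≤ 2, and it is triangle-free if and only if n ≤ 8. -/
open Matrix

namespace DiagTF

open Complex

/-- diagonal matrix unit -/
noncomputable def Dmat {n : ℕ} (i : Fin n) : Matrix (Fin n) (Fin n) ℂ :=
  Matrix.single i i 1

lemma Dmat_isDiag {n : ℕ} (i : Fin n) : (Dmat i).IsDiag := by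
  intro a b hab
  simp only [Dmat, Matrix.single, Matrix.of_apply]
  rw [if_neg]
  rintro ⟨rfl, rfl⟩
  exact hab rfl

lemma sum_Dmat {n : ℕ} : (∑ i, Dmat (n := n) i) = 1 := by
  ext a b
  rw [Matrix.sum_apply]
  by_cases h : a = b
  · subst h
    rw [Finset.sum_eq_single a]
    · simp [Dmat, Matrix.single]
    · intro i _ hi
      simp only [Dmat, Matrix.single, Matrix.of_apply]
      rw [if_neg]
      rintro ⟨rfl, -⟩
      exact hi rfl
    · simp
  · rw [Finset.sum_eq_zero, Matrix.one_apply_ne h]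
    intro i _
    simp only [Dmat, Matrix.single, Matrix.of_apply]
    rw [if_neg]
    rintro ⟨rfl, rfl⟩
    exact h rfl

lemma diag_eq_sum {n : ℕ} {M : Matrix (Fin n) (Fin n) ℂ} (hM : M.IsDiag) :
    M = ∑ i, M i i • Dmat i := by
  ext a b
  rw [Matrix.sum_apply]
  by_cases h : a = b
  · subst h
    rw [Finset.sum_eq_single a]
    · simp [Dmat, Matrix.single]
    · intro i _ hi
      simp only [Matrix.smul_apply, Dmat, Matrix.single, Matrix.of_apply]
      rw [if_neg, smul_zero]
      rintro ⟨rfl, -⟩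
      exact hi rfl
    · simp
  · rw [Finset.sum_eq_zero, hM h]
    intro i _
    simp only [Matrix.smul_apply, Dmat, Matrix.single, Matrix.of_apply]
    rw [if_neg, smul_zero]
    rintro ⟨rfl, rfl⟩
    exact h rfl

lemma rank_Dmat_le {n : ℕ} (i : Fin n) : (Dmat i).rank ≤ 1 := by
  classical
  have h : Dmat i = (Matrix.of fun a (_ : Fin 1) => if i = a then (1:ℂ) else 0) *
      (Matrix.of fun (_ : Fin 1) b => if i = b then (1:ℂ) else 0) := by
    ext a b
    simp only [Matrix.mul_apply, Matrix.of_apply, Dmat, Matrix.single,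
      Finset.univ_unique, Finset.sum_singleton]
    by_cases ha : i = a <;> by_cases hb : i = b <;> simp [ha, hb]
  calc (Dmat i).rank ≤ (Matrix.of fun a (_ : Fin 1) => if i = a then (1:ℂ) else 0).rank := by
        rw [h]; exact Matrix.rank_mul_le_left _ _
    _ ≤ Fintype.card (Fin 1) := Matrix.rank_le_card_width _
    _ = 1 := by simp

/-- there is no 2-anticlique for the diagonal system, ever -/
lemma no_two_anticlique {n : ℕ} (P : Matrix (Fin n) (Fin n) ℂ)
    (h : IsAnticlique { M : Matrix (Fin n) (Fin n) ℂ | M.IsDiag } 2 P) : False := by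
  obtain ⟨hproj, hrank, hsc⟩ := h
  choose c hc using fun i : Fin n => hsc (Dmat i) (Dmat_isDiag i)
  have hc0 : ∀ i, c i = 0 := by
    intro i
    by_contra hci
    have key : P = (((c i)⁻¹ • P) * Dmat i) * P := by
      have h2 : (((c i)⁻¹ • P) * Dmat i) * P = (c i)⁻¹ • (P * Dmat i * P) := by
        rw [Matrix.smul_mul, Matrix.smul_mul]
      rw [h2, hc i, smul_smul, inv_mul_cancel₀ hci, one_smul]
    have : P.rank ≤ 1 := by
      calc P.rank = ((((c i)⁻¹ • P) * Dmat i) * P).rank := by rw [← key]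
        _ ≤ (((c i)⁻¹ • P) * Dmat i).rank := Matrix.rank_mul_le_left _ _
        _ ≤ (Dmat i).rank := Matrix.rank_mul_le_right _ _
        _ ≤ 1 := rank_Dmat_le i
    omega
  have hP0 : P = 0 := by
    have : P = ∑ i, P * Dmat i * P := by
      calc P = P * (1 : Matrix (Fin n) (Fin n) ℂ) * P := by rw [Matrix.mul_one, hproj.2]
        _ = P * (∑ i, Dmat i) * P := by rw [sum_Dmat]
        _ = ∑ i, P * Dmat i * P := by rw [Finset.mul_sum, Finset.sum_mul]
    rw [this]
    refine Finset.sum_eq_zero fun i _ => ?_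
    rw [hc i, hc0 i, zero_smul]
  rw [hP0, Matrix.rank_zero] at hrank
  omega

/-- embedding matrix `Fin k → Fin n` -/
noncomputable def Emb (n k : ℕ) : Matrix (Fin n) (Fin k) ℂ :=
  Matrix.of fun i j => if (i : ℕ) = (j : ℕ) then 1 else 0

lemma Emb_conjTranspose_mul (n k : ℕ) (hkn : k ≤ n) :
    (Emb n k)ᴴ * Emb n k = 1 := by
  ext a b
  simp only [Matrix.mul_apply, Matrix.conjTranspose_apply, Emb, Matrix.of_apply]
  rw [Finset.sum_eq_single (Fin.castLE hkn a)]
  · simp only [Fin.coe_castLE]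
    by_cases h : a = b
    · subst h; simp
    · rw [if_neg (fun hv => h (Fin.ext hv)), mul_zero, Matrix.one_apply_ne h]
  · intro i _ hi
    rw [if_neg, star_zero, zero_mul]
    intro hv
    exact hi (Fin.ext (by simpa using hv))
  · simp

lemma rank_emb_proj (n k : ℕ) (hkn : k ≤ n) :
    (Emb n k * (Emb n k)ᴴ).rank = k := by
  set E := Emb n k
  have h1 : E * Eᴴ * E = E := by
    rw [Matrix.mul_assoc, Emb_conjTranspose_mul n k hkn, Matrix.mul_one]
  apply le_antisymm
  · calc (E * Eᴴ).rank ≤ E.rank := Matrix.rank_mul_le_left _ _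
      _ ≤ Fintype.card (Fin k) := Matrix.rank_le_card_width _
      _ = k := Fintype.card_fin k
  · calc k = Fintype.card (Fin k) := (Fintype.card_fin k).symm
      _ = (1 : Matrix (Fin k) (Fin k) ℂ).rank := (Matrix.rank_one).symm
      _ = (Eᴴ * (E * Eᴴ * E)).rank := by rw [h1, Emb_conjTranspose_mul n k hkn]
      _ ≤ (E * Eᴴ * E).rank := Matrix.rank_mul_le_right _ _
      _ = ((E * Eᴴ) * E).rank := rfl
      _ ≤ (E * Eᴴ).rank := Matrix.rank_mul_le_left _ _

lemma not_stronglyTriangleFree {n : ℕ} (hn : 3 ≤ n) :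
    ¬ StronglyTriangleFree { M : Matrix (Fin n) (Fin n) ℂ | M.IsDiag } := by
  intro hstf
  set E := Emb n 3
  have hQproj : IsProjection (E * Eᴴ) := by
    constructor
    · unfold Matrix.IsHermitian
      rw [Matrix.conjTranspose_mul, Matrix.conjTranspose_conjTranspose]
    · rw [Matrix.mul_assoc, ← Matrix.mul_assoc Eᴴ, Emb_conjTranspose_mul n 3 hn,
        Matrix.one_mul]
  obtain ⟨P, hP, -, -⟩ := hstf (E * Eᴴ) hQproj (rank_emb_proj n 3 hn)
  exact no_two_anticlique P hP

lemma stronglyTriangleFree_of_le {n : ℕ} (hn : n ≤ 2) :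
    StronglyTriangleFree { M : Matrix (Fin n) (Fin n) ℂ | M.IsDiag } := by
  intro Q _ hQ
  exfalso
  have h := Matrix.rank_le_card_width Q
  rw [hQ, Fintype.card_fin] at h
  omega

lemma sandwich_std {p q : ℕ} (u : Matrix (Fin p) (Fin q) ℂ) (i : Fin p) :
    uᴴ * Matrix.single i i (1:ℂ) * u = Matrix.of fun a b => star (u i a) * u i b := by
  ext a b
  simp only [Matrix.mul_apply, Matrix.conjTranspose_apply, Matrix.single,
    Matrix.of_apply, ite_and, mul_ite, mul_one, mul_zero, ite_mul, zero_mul,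
    Finset.sum_ite_eq, Finset.mem_univ, if_true]

noncomputable def mm : Matrix (Fin 9) (Fin 3) ℂ :=
  !![1,0,0; 0,1,0; 0,0,1; 1,1,0; 1,0,1; 0,1,1; 1,I,0; 1,0,I; 0,1,I]

noncomputable def Tm : Matrix (Fin 3) (Fin 3) ℂ :=
  !![5, 1+I, 1+I; 1-I, 5, 1+I; 1-I, 1-I, 5]

noncomputable def G3 : Matrix (Fin 3) (Fin 3) ℂ :=
  !![23/99, -1/33 - 5/99*I, -5/99 - 1/33*I;
     -1/33 + 5/99*I, 23/99, -1/33 - 5/99*I;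
     -5/99 + 1/33*I, -1/33 + 5/99*I, 23/99]

lemma mm_mul : mmᴴ * mm = Tm := by
  ext a b
  fin_cases a <;> fin_cases b <;>
    norm_num [mm, Tm, Matrix.mul_apply, Fin.sum_univ_succ, Complex.ext_iff,
      Matrix.vecHead, Matrix.vecTail]

lemma TG : Tm * G3 = 1 := by
  ext a b
  fin_cases a <;> fin_cases b <;>
    norm_num [Tm, G3, Matrix.mul_apply, Fin.sum_univ_succ, Complex.ext_iff,
      Matrix.one_apply, Fin.ext_iff, Matrix.vecHead, Matrix.vecTail]

lemma GT : G3 * Tm = 1 := by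
  ext a b
  fin_cases a <;> fin_cases b <;>
    norm_num [Tm, G3, Matrix.mul_apply, Fin.sum_univ_succ, Complex.ext_iff,
      Matrix.one_apply, Fin.ext_iff, Matrix.vecHead, Matrix.vecTail]

lemma G3h : G3ᴴ = G3 := by
  ext a b
  fin_cases a <;> fin_cases b <;> norm_num [G3, Complex.ext_iff]

noncomputable def Nmat (j : Fin 9) : Matrix (Fin 3) (Fin 3) ℂ :=
  mmᴴ * Matrix.single j j (1:ℂ) * mm

lemma Nmat_apply (j : Fin 9) (a b : Fin 3) : Nmat j a b = star (mm j a) * mm j b := by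
  have := congrFun (congrFun (sandwich_std mm j) a) b
  simpa [Nmat] using this

lemma combo00 : Matrix.single (0:Fin 3) (0:Fin 3) (1:ℂ) =
    ∑ j, (![1, 0, 0, 0, 0, 0, 0, 0, 0] : Fin 9 → ℂ) j • Nmat j := by
  ext a b
  fin_cases a <;> fin_cases b <;>
    norm_num [Matrix.sum_apply, Matrix.smul_apply, Nmat_apply, mm, Fin.sum_univ_succ,
      Complex.ext_iff, Matrix.vecHead, Matrix.vecTail, Matrix.single, Fin.ext_iff]

lemma combo01 : Matrix.single (0:Fin 3) (1:Fin 3) (1:ℂ) =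
    ∑ j, (![-1/2+I/2, -1/2+I/2, 0, 1/2, 0, 0, -I/2, 0, 0] : Fin 9 → ℂ) j • Nmat j := by
  ext a b
  fin_cases a <;> fin_cases b <;>
    norm_num [Matrix.sum_apply, Matrix.smul_apply, Nmat_apply, mm, Fin.sum_univ_succ,
      Complex.ext_iff, Matrix.vecHead, Matrix.vecTail, Matrix.single, Fin.ext_iff]

lemma combo02 : Matrix.single (0:Fin 3) (2:Fin 3) (1:ℂ) =
    ∑ j, (![-1/2+I/2, 0, -1/2+I/2, 0, 1/2, 0, 0, -I/2, 0] : Fin 9 → ℂ) j • Nmat j := by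
  ext a b
  fin_cases a <;> fin_cases b <;>
    norm_num [Matrix.sum_apply, Matrix.smul_apply, Nmat_apply, mm, Fin.sum_univ_succ,
      Complex.ext_iff, Matrix.vecHead, Matrix.vecTail, Matrix.single, Fin.ext_iff]

lemma combo10 : Matrix.single (1:Fin 3) (0:Fin 3) (1:ℂ) =
    ∑ j, (![-1/2-I/2, -1/2-I/2, 0, 1/2, 0, 0, I/2, 0, 0] : Fin 9 → ℂ) j • Nmat j := by
  ext a b
  fin_cases a <;> fin_cases b <;>
    norm_num [Matrix.sum_apply, Matrix.smul_apply, Nmat_apply, mm, Fin.sum_univ_succ,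
      Complex.ext_iff, Matrix.vecHead, Matrix.vecTail, Matrix.single, Fin.ext_iff]

lemma combo11 : Matrix.single (1:Fin 3) (1:Fin 3) (1:ℂ) =
    ∑ j, (![0, 1, 0, 0, 0, 0, 0, 0, 0] : Fin 9 → ℂ) j • Nmat j := by
  ext a b
  fin_cases a <;> fin_cases b <;>
    norm_num [Matrix.sum_apply, Matrix.smul_apply, Nmat_apply, mm, Fin.sum_univ_succ,
      Complex.ext_iff, Matrix.vecHead, Matrix.vecTail, Matrix.single, Fin.ext_iff]

lemma combo12 : Matrix.single (1:Fin 3) (2:Fin 3) (1:ℂ) =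
    ∑ j, (![0, -1/2+I/2, -1/2+I/2, 0, 0, 1/2, 0, 0, -I/2] : Fin 9 → ℂ) j • Nmat j := by
  ext a b
  fin_cases a <;> fin_cases b <;>
    norm_num [Matrix.sum_apply, Matrix.smul_apply, Nmat_apply, mm, Fin.sum_univ_succ,
      Complex.ext_iff, Matrix.vecHead, Matrix.vecTail, Matrix.single, Fin.ext_iff]

lemma combo20 : Matrix.single (2:Fin 3) (0:Fin 3) (1:ℂ) =
    ∑ j, (![-1/2-I/2, 0, -1/2-I/2, 0, 1/2, 0, 0, I/2, 0] : Fin 9 → ℂ) j • Nmat j := by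
  ext a b
  fin_cases a <;> fin_cases b <;>
    norm_num [Matrix.sum_apply, Matrix.smul_apply, Nmat_apply, mm, Fin.sum_univ_succ,
      Complex.ext_iff, Matrix.vecHead, Matrix.vecTail, Matrix.single, Fin.ext_iff]

lemma combo21 : Matrix.single (2:Fin 3) (1:Fin 3) (1:ℂ) =
    ∑ j, (![0, -1/2-I/2, -1/2-I/2, 0, 0, 1/2, 0, 0, I/2] : Fin 9 → ℂ) j • Nmat j := by
  ext a b
  fin_cases a <;> fin_cases b <;>
    norm_num [Matrix.sum_apply, Matrix.smul_apply, Nmat_apply, mm, Fin.sum_univ_succ,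
      Complex.ext_iff, Matrix.vecHead, Matrix.vecTail, Matrix.single, Fin.ext_iff]

lemma combo22 : Matrix.single (2:Fin 3) (2:Fin 3) (1:ℂ) =
    ∑ j, (![0, 0, 1, 0, 0, 0, 0, 0, 0] : Fin 9 → ℂ) j • Nmat j := by
  ext a b
  fin_cases a <;> fin_cases b <;>
    norm_num [Matrix.sum_apply, Matrix.smul_apply, Nmat_apply, mm, Fin.sum_univ_succ,
      Complex.ext_iff, Matrix.vecHead, Matrix.vecTail, Matrix.single, Fin.ext_iff]

lemma hspan (X : Matrix (Fin 3) (Fin 3) ℂ) :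
    X ∈ Submodule.span ℂ (Set.range Nmat) := by
  have combo_mem : ∀ μ : Fin 9 → ℂ,
      (∑ j, μ j • Nmat j) ∈ Submodule.span ℂ (Set.range Nmat) :=
    fun μ => Submodule.sum_mem _ fun j _ =>
      Submodule.smul_mem _ _ (Submodule.subset_span (Set.mem_range_self j))
  have hstd : ∀ a b : Fin 3,
      Matrix.single a b (1:ℂ) ∈ Submodule.span ℂ (Set.range Nmat) := by
    intro a b
    fin_cases a <;> fin_cases b
    · show Matrix.single (0:Fin 3) (0:Fin 3) (1:ℂ) ∈ Submodule.span ℂ (Set.range Nmat)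
      rw [combo00]; exact combo_mem _
    · show Matrix.single (0:Fin 3) (1:Fin 3) (1:ℂ) ∈ Submodule.span ℂ (Set.range Nmat)
      rw [combo01]; exact combo_mem _
    · show Matrix.single (0:Fin 3) (2:Fin 3) (1:ℂ) ∈ Submodule.span ℂ (Set.range Nmat)
      rw [combo02]; exact combo_mem _
    · show Matrix.single (1:Fin 3) (0:Fin 3) (1:ℂ) ∈ Submodule.span ℂ (Set.range Nmat)
      rw [combo10]; exact combo_mem _
    · show Matrix.single (1:Fin 3) (1:Fin 3) (1:ℂ) ∈ Submodule.span ℂ (Set.range Nmat)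
      rw [combo11]; exact combo_mem _
    · show Matrix.single (1:Fin 3) (2:Fin 3) (1:ℂ) ∈ Submodule.span ℂ (Set.range Nmat)
      rw [combo12]; exact combo_mem _
    · show Matrix.single (2:Fin 3) (0:Fin 3) (1:ℂ) ∈ Submodule.span ℂ (Set.range Nmat)
      rw [combo20]; exact combo_mem _
    · show Matrix.single (2:Fin 3) (1:Fin 3) (1:ℂ) ∈ Submodule.span ℂ (Set.range Nmat)
      rw [combo21]; exact combo_mem _
    · show Matrix.single (2:Fin 3) (2:Fin 3) (1:ℂ) ∈ Submodule.span ℂ (Set.range Nmat)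
      rw [combo22]; exact combo_mem _
  nth_rewrite 1 [Matrix.matrix_eq_sum_single X]
  refine Submodule.sum_mem _ fun a _ => Submodule.sum_mem _ fun b _ => ?_
  have h : Matrix.single a b (X a b) = X a b • Matrix.single a b (1:ℂ) := by
    simp
  rw [h]
  exact Submodule.smul_mem _ _ (hstd a b)

lemma not_triangleFree {n : ℕ} (hn : 9 ≤ n) :
    ¬ TriangleFree { M : Matrix (Fin n) (Fin n) ℂ | M.IsDiag } := by
  intro htf
  have h9 : (9:ℕ) ≤ n := hn
  set A : Matrix (Fin n) (Fin 3) ℂ := Emb n 9 * mm with hA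
  set B : Matrix (Fin n) (Fin 3) ℂ := A * G3 with hB
  have hAA : Aᴴ * A = Tm := by
    rw [hA, Matrix.conjTranspose_mul, Matrix.mul_assoc, ← Matrix.mul_assoc (Emb n 9)ᴴ,
      Emb_conjTranspose_mul n 9 hn, Matrix.one_mul, mm_mul]
  have hAB : Aᴴ * B = 1 := by rw [hB, ← Matrix.mul_assoc, hAA, TG]
  have hBh : Bᴴ = G3 * Aᴴ := by rw [hB, Matrix.conjTranspose_mul, G3h]
  have hBA : Bᴴ * A = 1 := by rw [hBh, Matrix.mul_assoc, hAA, GT]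
  have hABBA : A * Bᴴ = B * Aᴴ := by rw [hBh, hB, ← Matrix.mul_assoc]
  set P : Matrix (Fin n) (Fin n) ℂ := B * Aᴴ with hP
  have hPh : P.IsHermitian := by
    show Pᴴ = P
    rw [hP, Matrix.conjTranspose_mul, Matrix.conjTranspose_conjTranspose, hABBA]
  have hPP : P * P = P := by
    rw [hP, Matrix.mul_assoc, ← Matrix.mul_assoc Aᴴ B, hAB, Matrix.one_mul]
  have hPB : P * B = B := by rw [hP, Matrix.mul_assoc, hAB, Matrix.mul_one]
  have hrank : P.rank = 3 := by
    apply le_antisymm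
    · calc P.rank ≤ Aᴴ.rank := by rw [hP]; exact Matrix.rank_mul_le_right _ _
        _ ≤ Fintype.card (Fin 3) := Matrix.rank_le_card_height _
        _ = 3 := Fintype.card_fin 3
    · calc 3 = Fintype.card (Fin 3) := (Fintype.card_fin 3).symm
        _ = (1 : Matrix (Fin 3) (Fin 3) ℂ).rank := Matrix.rank_one.symm
        _ = (Aᴴ * (P * B)).rank := by rw [hPB, hAB]
        _ ≤ (P * B).rank := Matrix.rank_mul_le_right _ _
        _ ≤ P.rank := Matrix.rank_mul_le_left _ _
  let L : Matrix (Fin 3) (Fin 3) ℂ →ₗ[ℂ] Matrix (Fin n) (Fin n) ℂ :=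
    { toFun := fun X => B * X * Bᴴ
      map_add' := fun X Y => by simp only [Matrix.mul_add, Matrix.add_mul]
      map_smul' := fun c X => by simp only [Matrix.mul_smul, Matrix.smul_mul, RingHom.id_apply] }
  have hLapp : ∀ X, L X = B * X * Bᴴ := fun X => rfl
  have hLAZ : ∀ Z, Aᴴ * (L Z) * A = Z := by
    intro Z
    rw [hLapp]
    calc Aᴴ * (B * Z * Bᴴ) * A = (Aᴴ * B) * (Z * (Bᴴ * A)) := by
          simp only [Matrix.mul_assoc]
      _ = Z := by rw [hAB, hBA, Matrix.one_mul, Matrix.mul_one]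
  have hLinj : Function.Injective L := by
    intro X Y hXY
    have := congrArg (fun Z => Aᴴ * Z * A) hXY
    simpa only [hLAZ] using this
  have hrowA : ∀ (j : Fin 9) (c : Fin 3), A (Fin.castLE hn j) c = mm j c := by
    intro j c
    rw [hA, Matrix.mul_apply]
    rw [Finset.sum_eq_single j]
    · simp [Emb]
    · intro k _ hk
      have hv : ¬ ((j : ℕ) = (k : ℕ)) := fun hv => hk (Fin.ext hv.symm)
      simp [Emb, hv]
    · simp
  have hAD : ∀ j : Fin 9, Aᴴ * Dmat (Fin.castLE hn j) * A = Nmat j := by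
    intro j
    rw [Dmat, sandwich_std]
    have h2 : Nmat j = Matrix.of fun a b => star (mm j a) * mm j b := by
      rw [Nmat, sandwich_std]
    rw [h2]
    ext a b
    simp [hrowA]
  have hLN : ∀ j : Fin 9, L (Nmat j) = P * Dmat (Fin.castLE hn j) * P := by
    intro j
    rw [hLapp, ← hAD j, hP]
    calc B * (Aᴴ * Dmat (Fin.castLE hn j) * A) * Bᴴ
        = B * (Aᴴ * (Dmat (Fin.castLE hn j) * (A * Bᴴ))) := by simp only [Matrix.mul_assoc]
      _ = B * Aᴴ * Dmat (Fin.castLE hn j) * (B * Aᴴ) := by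
          rw [hABBA, hP]; simp only [Matrix.mul_assoc]
  have hcomp : compressionSpace { M : Matrix (Fin n) (Fin n) ℂ | M.IsDiag } P
      = LinearMap.range L := by
    apply le_antisymm
    · rw [compressionSpace, Submodule.span_le]
      rintro _ ⟨M, -, rfl⟩
      refine ⟨Aᴴ * M * A, ?_⟩
      show B * (Aᴴ * M * A) * Bᴴ = P * M * P
      rw [hP]
      calc B * (Aᴴ * M * A) * Bᴴ = B * (Aᴴ * (M * (A * Bᴴ))) := by
            simp only [Matrix.mul_assoc]
        _ = B * Aᴴ * M * (B * Aᴴ) := by rw [hABBA, hP]; simp only [Matrix.mul_assoc]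
    · rintro _ ⟨X, rfl⟩
      have hmem : L X ∈ Submodule.map L (Submodule.span ℂ (Set.range Nmat)) :=
        Submodule.mem_map_of_mem (hspan X)
      rw [Submodule.map_span] at hmem
      refine Submodule.span_le.2 ?_ hmem
      rintro _ ⟨_, ⟨j, rfl⟩, rfl⟩
      rw [compressionSpace]
      refine Submodule.subset_span ⟨Dmat (Fin.castLE hn j), Dmat_isDiag _, ?_⟩
      exact (hLN j).symm
  have hfin : Module.finrank ℂ
      (compressionSpace { M : Matrix (Fin n) (Fin n) ℂ | M.IsDiag } P) = 9 := by
    rw [hcomp, LinearMap.finrank_range_of_inj hLinj]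
    rw [Module.finrank_matrix]
    simp
  exact htf P ⟨⟨hPh, hPP⟩, hrank, by rw [hfin]; norm_num⟩

lemma triangleFree_of_le {n : ℕ} (hn : n ≤ 8) :
    TriangleFree { M : Matrix (Fin n) (Fin n) ℂ | M.IsDiag } := by
  rintro P ⟨-, -, hdim⟩
  have hle : compressionSpace { M : Matrix (Fin n) (Fin n) ℂ | M.IsDiag } P
      ≤ Submodule.span ℂ (Set.range fun i : Fin n => P * Dmat i * P) := by
    rw [compressionSpace, Submodule.span_le]
    rintro _ ⟨M, hM, rfl⟩
    have hMd := diag_eq_sum hM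
    have hsum : P * M * P = ∑ i, M i i • (P * Dmat i * P) := by
      conv_lhs => rw [hMd]
      rw [Finset.mul_sum, Finset.sum_mul]
      refine Finset.sum_congr rfl fun i _ => ?_
      rw [Matrix.mul_smul, Matrix.smul_mul]
    simp only [SetLike.mem_coe]
    show P * M * P ∈ Submodule.span ℂ (Set.range fun i : Fin n => P * Dmat i * P)
    rw [hsum]
    exact Submodule.sum_mem _ fun i _ =>
      Submodule.smul_mem _ _ (Submodule.subset_span ⟨i, rfl⟩)
  have h1 := Submodule.finrank_mono (R := ℂ) hle
  have h2 := finrank_range_le_card (R := ℂ) (fun i : Fin n => P * Dmat i * P)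
  unfold Set.finrank at h2
  rw [hdim] at h1
  rw [Fintype.card_fin] at h2
  norm_num at h1
  omega

end DiagTF

/-- The diagonal operator system `D_n` is strongly triangle-free iff `n ≤ 2`, and
triangle-free iff `n ≤ 8`. -/
theorem diagonal_triangleFree_iff (n : ℕ) :
    (StronglyTriangleFree { M : Matrix (Fin n) (Fin n) ℂ | M.IsDiag } ↔ n ≤ 2) ∧
    (TriangleFree { M : Matrix (Fin n) (Fin n) ℂ | M.IsDiag } ↔ n ≤ 8) := by
  constructor
  · constructor
    · intro h
      by_contra hc
      exact DiagTF.not_stronglyTriangleFree (by omega) h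
    · exact DiagTF.stronglyTriangleFree_of_le
  · constructor
    · intro h
      by_contra hc
      exact DiagTF.not_triangleFree (by omega) h
    · exact DiagTF.triangleFree_of_le
end

section
/- Let m, n ≥ 2. Then the complete bipartite operator system K_{m,n} ⊆ M_{m+n}(ℂ) has a 3-clique. -/
open Matrix

/-- The complete bipartite operator system `K_{m,n} ⊆ M_{m+n}(ℂ)`: all block matrices
`[[a·I_m, A],[B, b·I_n]]` with `a, b ∈ ℂ`, i.e. matrices whose two diagonal blocks are
scalar and whose off-diagonal blocks are arbitrary. -/
def bipartiteSystem (m n : ℕ) : Set (Matrix (Fin (m + n)) (Fin (m + n)) ℂ) :=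
  { M | ∃ a b : ℂ, ∀ i j : Fin (m + n),
      (((i : ℕ) < m ∧ (j : ℕ) < m) → M i j = if i = j then a else 0) ∧
      ((¬ (i : ℕ) < m ∧ ¬ (j : ℕ) < m) → M i j = if i = j then b else 0) }

namespace BipHelper

variable {N : ℕ}

lemma vmv_mul_vmv (u v w x : Fin N → ℂ) :
    vecMulVec u v * vecMulVec w x = (v ⬝ᵥ w) • vecMulVec u x := by
  ext i j
  simp only [mul_apply, vecMulVec_apply, Matrix.smul_apply, smul_eq_mul, dotProduct, Finset.sum_mul]
  exact Finset.sum_congr rfl fun k _ => by ring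

lemma mul_vmv (A : Matrix (Fin N) (Fin N) ℂ) (w x : Fin N → ℂ) :
    A * vecMulVec w x = vecMulVec (A *ᵥ w) x := by
  ext i j
  simp only [mul_apply, vecMulVec_apply, mulVec, dotProduct, Finset.sum_mul]
  exact Finset.sum_congr rfl fun k _ => by ring

lemma vmv_mulVec (u w x : Fin N → ℂ) : vecMulVec u w *ᵥ x = (w ⬝ᵥ x) • u := by
  funext i
  simp only [mulVec, dotProduct, vecMulVec_apply, Pi.smul_apply, smul_eq_mul, Finset.sum_mul]
  exact Finset.sum_congr rfl fun k _ => by ring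

lemma vmv_conjT (u w : Fin N → ℂ) : (vecMulVec u w)ᴴ = vecMulVec (star w) (star u) := by
  ext i j; simp [conjTranspose_apply, vecMulVec_apply, mul_comm]

lemma main (N : ℕ) (p0 p1 q0 q1 : Fin N) (f : Fin N → Bool)
    (hpp : p0 ≠ p1) (hqq : q0 ≠ q1)
    (hf0 : f p0 = true) (hf1 : f p1 = true) (hg0 : f q0 = false) (hg1 : f q1 = false)
    (V : Set (Matrix (Fin N) (Fin N) ℂ))
    (h1V : (1 : Matrix (Fin N) (Fin N) ℂ) ∈ V)
    (hdV : Matrix.diagonal (fun i => if f i then (1 : ℂ) else -1) ∈ V)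
    (hE : ∀ p q : Fin N, f p ≠ f q →
      vecMulVec (Pi.single p (1:ℂ)) (Pi.single q (1:ℂ)) ∈ V) :
    ∃ P, IsClique V 3 P := by
  classical
  -- distinctness
  have hpq00 : p0 ≠ q0 := fun h => by rw [h, hg0] at hf0; exact Bool.noConfusion hf0
  have hpq01 : p0 ≠ q1 := fun h => by rw [h, hg1] at hf0; exact Bool.noConfusion hf0
  have hpq10 : p1 ≠ q0 := fun h => by rw [h, hg0] at hf1; exact Bool.noConfusion hf1
  have hpq11 : p1 ≠ q1 := fun h => by rw [h, hg1] at hf1; exact Bool.noConfusion hf1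
  set s : ℂ := ((Real.sqrt 2 : ℝ) : ℂ)⁻¹ with hsdef
  have hs2 : s * s = 1/2 := by
    rw [hsdef, ← mul_inv, ← Complex.ofReal_mul, Real.mul_self_sqrt (by norm_num)]
    norm_num
  have hs0 : s ≠ 0 := by simp [hsdef, Complex.ofReal_ne_zero]
  have hss : star s = s := by
    simp [hsdef, Complex.star_def, map_inv₀, Complex.conj_ofReal]
  set e : Fin N → Fin N → ℂ := fun p => Pi.single p 1 with he
  set v : Fin 3 → Fin N → ℂ :=
    fun a => if a = 0 then e p0 else if a = 1 then e q0 else s • (e p1 + e q1) with hv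
  -- value tables
  have hvp0 : ∀ a, v a p0 = if a = 0 then 1 else 0 := by
    intro a; fin_cases a <;>
      simp [hv, he, Pi.single_apply, hpp, hpq00.symm, hpq01, Ne.symm hpp]
  have hvq0 : ∀ a, v a q0 = if a = 1 then 1 else 0 := by
    intro a; fin_cases a <;>
      simp [hv, he, Pi.single_apply, hpq00, hpq10, hqq, Ne.symm hpq10, Ne.symm hqq]
  have hvp1 : ∀ a, v a p1 = if a = 2 then s else 0 := by
    intro a; fin_cases a <;>
      simp [hv, he, Pi.single_apply, Ne.symm hpp, hpq10, Ne.symm hpp, hpq11, hpp]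
  have hvq1 : ∀ a, v a q1 = if a = 2 then s else 0 := by
    intro a; fin_cases a <;>
      simp [hv, he, Pi.single_apply, hpq01, hqq, Ne.symm hpq01, Ne.symm hqq, hpq11]
  have ortho : ∀ a b, v a ⬝ᵥ v b = if a = b then 1 else 0 := by
    intro a b
    fin_cases a <;> fin_cases b <;>
      simp [hv, he, single_dotProduct, dotProduct_single, dotProduct_smul, smul_dotProduct,
        dotProduct_add, add_dotProduct, Pi.single_apply, hpp, hqq, hpq00, hpq01, hpq10, hpq11,
        Ne.symm hpp, Ne.symm hqq, Ne.symm hpq00, Ne.symm hpq01, Ne.symm hpq10, Ne.symm hpq11,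
        hs2] <;> ring_nf <;> rw [← hs2] <;> ring
  set P : Matrix (Fin N) (Fin N) ℂ := ∑ a : Fin 3, vecMulVec (v a) (v a) with hP
  have key : ∀ A : Matrix (Fin N) (Fin N) ℂ,
      P * A * P = ∑ a : Fin 3, ∑ b : Fin 3,
        (v a ⬝ᵥ (A *ᵥ v b)) • vecMulVec (v a) (v b) := by
    intro A
    rw [hP]
    simp only [Finset.sum_mul, Finset.mul_sum]
    rw [Finset.sum_comm]
    refine Finset.sum_congr rfl fun a _ => Finset.sum_congr rfl fun b _ => ?_
    rw [mul_assoc, mul_vmv, vmv_mul_vmv]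
  have hPP : P * P = P := by
    have h := key 1
    rw [mul_one] at h
    rw [h, hP]
    simp [ortho, Matrix.one_mulVec, Fin.sum_univ_three]
  have hstar : ∀ a, star (v a) = v a := by
    intro a
    fin_cases a <;> funext k <;>
      simp [hv, he, Pi.single_apply, apply_ite (star : ℂ → ℂ), hss]
  have hherm : P.IsHermitian := by
    show Pᴴ = P
    rw [hP, conjTranspose_sum]
    exact Finset.sum_congr rfl fun a _ => by rw [vmv_conjT, hstar]
  have hmv : ∀ x, P *ᵥ x = ∑ a : Fin 3, (v a ⬝ᵥ x) • v a := by
    intro x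
    rw [hP, Fin.sum_univ_three, add_mulVec, add_mulVec, vmv_mulVec, vmv_mulVec, vmv_mulVec,
      Fin.sum_univ_three]
  have hfix : ∀ a, P *ᵥ v a = v a := by
    intro a
    rw [hmv]
    fin_cases a <;> simp [ortho, Fin.sum_univ_three]
  have hvind : LinearIndependent ℂ v := by
    rw [Fintype.linearIndependent_iff]
    intro g hg
    rw [Fin.sum_univ_three] at hg
    have h0 := congrFun hg p0
    have h1 := congrFun hg q0
    have h2 := congrFun hg p1
    simp [hvp0, hvq0, hvp1] at h0 h1 h2
    intro i
    fin_cases i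
    · exact h0
    · exact h1
    · rcases h2 with h | h
      · exact h
      · exact absurd h hs0
  have hrank : P.rank = 3 := by
    have hrange : LinearMap.range P.mulVecLin = Submodule.span ℂ (Set.range v) := by
      apply le_antisymm
      · rintro x ⟨y, rfl⟩
        rw [mulVecLin_apply, hmv]
        exact Submodule.sum_mem _ fun a _ =>
          Submodule.smul_mem _ _ (Submodule.subset_span ⟨a, rfl⟩)
      · rw [Submodule.span_le]
        rintro x ⟨a, rfl⟩
        exact ⟨v a, by rw [mulVecLin_apply, hfix]⟩
    rw [Matrix.rank, hrange, finrank_span_eq_card hvind, Fintype.card_fin]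
  set W : Fin 3 × Fin 3 → Matrix (Fin N) (Fin N) ℂ :=
    fun ab => vecMulVec (v ab.1) (v ab.2) with hW
  have memC : ∀ A ∈ V, P * A * P ∈ compressionSpace V P :=
    fun A hA => Submodule.subset_span ⟨A, hA, rfl⟩
  have hcomp : ∀ x y : Fin N, P * vecMulVec (e x) (e y) * P =
      ∑ a : Fin 3, ∑ b : Fin 3, (v a x * v b y) • vecMulVec (v a) (v b) := by
    intro x y
    rw [key]
    refine Finset.sum_congr rfl fun a _ => Finset.sum_congr rfl fun b _ => ?_
    rw [vmv_mulVec]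
    congr 1
    rw [dotProduct_smul, smul_eq_mul, he]
    simp only [single_dotProduct, dotProduct_single, one_mul, mul_one]
    ring
  -- compressions of the elementary cross matrices
  have hq01 : P * vecMulVec (e p0) (e q0) * P = W (0, 1) := by
    rw [hcomp]; simp [hW, Fin.sum_univ_three, hvp0, hvq0]
  have hq10 : P * vecMulVec (e q0) (e p0) * P = W (1, 0) := by
    rw [hcomp]; simp [hW, Fin.sum_univ_three, hvp0, hvq0]
  have hq02 : P * vecMulVec (e p0) (e q1) * P = s • W (0, 2) := by
    rw [hcomp]; simp [hW, Fin.sum_univ_three, hvp0, hvq1]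
  have hq20 : P * vecMulVec (e q1) (e p0) * P = s • W (2, 0) := by
    rw [hcomp]; simp [hW, Fin.sum_univ_three, hvp0, hvq1]
  have hq12 : P * vecMulVec (e q0) (e p1) * P = s • W (1, 2) := by
    rw [hcomp]; simp [hW, Fin.sum_univ_three, hvq0, hvp1]
  have hq21 : P * vecMulVec (e p1) (e q0) * P = s • W (2, 1) := by
    rw [hcomp]; simp [hW, Fin.sum_univ_three, hvq0, hvp1]
  have hq22 : P * vecMulVec (e p1) (e q1) * P = (s * s) • W (2, 2) := by
    rw [hcomp]; simp [hW, Fin.sum_univ_three, hvp1, hvq1, smul_smul]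
  set D : Matrix (Fin N) (Fin N) ℂ :=
    Matrix.diagonal (fun i => if f i then (1 : ℂ) else -1) with hD
  have cD : ∀ a b : Fin 3, v a ⬝ᵥ (D *ᵥ v b) =
      if a = 0 ∧ b = 0 then 1 else if a = 1 ∧ b = 1 then -1 else 0 := by
    intro a b
    fin_cases a <;> fin_cases b <;>
      simp [hD, hv, he, mulVec_smul, Matrix.mulVec_add, Matrix.diagonal_mulVec_single,
        single_dotProduct, dotProduct_single, dotProduct_add, dotProduct_smul,
        Pi.single_apply, hf0, hf1, hg0, hg1,
        hpp, hqq, hpq00, hpq01, hpq10, hpq11,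
        Ne.symm hpp, Ne.symm hqq, Ne.symm hpq00, Ne.symm hpq01, Ne.symm hpq10, Ne.symm hpq11]
  have hdiag : P * D * P = W (0, 0) - W (1, 1) := by
    rw [key]
    simp [cD, hW, Fin.sum_univ_three, sub_eq_add_neg]
  have hid : P * 1 * P = W (0, 0) + W (1, 1) + W (2, 2) := by
    rw [mul_one, hPP, hP, Fin.sum_univ_three]
  -- memberships of all W (a,b) in the compression space
  have unscale : ∀ (c : ℂ), c ≠ 0 → ∀ (x A : Matrix (Fin N) (Fin N) ℂ), A ∈ V →
      P * A * P = c • x → x ∈ compressionSpace V P := by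
    intro c hc x A hA hx
    have h := Submodule.smul_mem (compressionSpace V P) c⁻¹ (memC A hA)
    rwa [hx, smul_smul, inv_mul_cancel₀ hc, one_smul] at h
  have mem01 : W (0, 1) ∈ compressionSpace V P := by
    rw [← hq01]; exact memC _ (hE p0 q0 (by simp [hf0, hg0]))
  have mem10 : W (1, 0) ∈ compressionSpace V P := by
    rw [← hq10]; exact memC _ (hE q0 p0 (by simp [hf0, hg0]))
  have mem02 : W (0, 2) ∈ compressionSpace V P :=
    unscale s hs0 _ _ (hE p0 q1 (by simp [hf0, hg1])) hq02
  have mem20 : W (2, 0) ∈ compressionSpace V P :=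
    unscale s hs0 _ _ (hE q1 p0 (by simp [hf0, hg1])) hq20
  have mem12 : W (1, 2) ∈ compressionSpace V P :=
    unscale s hs0 _ _ (hE q0 p1 (by simp [hf1, hg0])) hq12
  have mem21 : W (2, 1) ∈ compressionSpace V P :=
    unscale s hs0 _ _ (hE p1 q0 (by simp [hf1, hg0])) hq21
  have mem22 : W (2, 2) ∈ compressionSpace V P :=
    unscale (s * s) (mul_ne_zero hs0 hs0) _ _ (hE p1 q1 (by simp [hf1, hg1])) hq22
  have mem00 : W (0, 0) ∈ compressionSpace V P := by
    have hexp : W (0, 0) = (1/2 : ℂ) • (P * 1 * P) + (1/2 : ℂ) • (P * D * P)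
        - (1/2 : ℂ) • W (2, 2) := by
      rw [hid, hdiag]; module
    rw [hexp]
    exact Submodule.sub_mem _
      (Submodule.add_mem _ (Submodule.smul_mem _ _ (memC _ h1V))
        (Submodule.smul_mem _ _ (memC _ hdV)))
      (Submodule.smul_mem _ _ mem22)
  have mem11 : W (1, 1) ∈ compressionSpace V P := by
    have hexp : W (1, 1) = (1/2 : ℂ) • (P * 1 * P) - (1/2 : ℂ) • (P * D * P)
        - (1/2 : ℂ) • W (2, 2) := by
      rw [hid, hdiag]; module
    rw [hexp]
    exact Submodule.sub_mem _
      (Submodule.sub_mem _ (Submodule.smul_mem _ _ (memC _ h1V))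
        (Submodule.smul_mem _ _ (memC _ hdV)))
      (Submodule.smul_mem _ _ mem22)
  -- the compression space equals the span of the W's
  have hspan : compressionSpace V P = Submodule.span ℂ (Set.range W) := by
    apply le_antisymm
    · rw [compressionSpace, Submodule.span_le]
      rintro x ⟨A, hA, rfl⟩
      simp only
      rw [key]
      exact Submodule.sum_mem _ fun a _ => Submodule.sum_mem _ fun b _ =>
        Submodule.smul_mem _ _ (Submodule.subset_span ⟨(a, b), rfl⟩)
    · rw [Submodule.span_le]
      rintro x ⟨⟨a, b⟩, rfl⟩
      fin_cases a <;> fin_cases b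
      · exact mem00
      · exact mem01
      · exact mem02
      · exact mem10
      · exact mem11
      · exact mem12
      · exact mem20
      · exact mem21
      · exact mem22
  -- linear independence of the W's
  have hWind : LinearIndependent ℂ W := by
    rw [Fintype.linearIndependent_iff]
    intro g hg
    have hxy : ∀ x y : Fin N,
        ∑ a : Fin 3, ∑ b : Fin 3, g (a, b) * (v a x * v b y) = 0 := by
      intro x y
      have h := congrFun (congrFun hg x) y
      simpa [Fintype.sum_prod_type, Matrix.sum_apply, hW, vecMulVec_apply, Finset.sum_apply,
        mul_assoc] using h
    intro p
    obtain ⟨a, b⟩ := p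
    have h00 := hxy p0 p0
    have h01 := hxy p0 q0
    have h02 := hxy p0 p1
    have h10 := hxy q0 p0
    have h11 := hxy q0 q0
    have h12 := hxy q0 p1
    have h20 := hxy p1 p0
    have h21 := hxy p1 q0
    have h22 := hxy p1 p1
    simp [Fin.sum_univ_three, hvp0, hvq0, hvp1, hs0] at h00 h01 h02 h10 h11 h12 h20 h21 h22
    fin_cases a <;> fin_cases b <;> assumption
  refine ⟨P, ⟨hherm, hPP⟩, hrank, ?_⟩
  rw [hspan, finrank_span_eq_card hWind]
  simp

end BipHelper

/-- For `m, n ≥ 2`, the complete bipartite operator system `K_{m,n}` has a 3-clique. -/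
theorem bipartite_has_three_clique (m n : ℕ) (hm : 2 ≤ m) (hn : 2 ≤ n) :
    ∃ P : Matrix (Fin (m + n)) (Fin (m + n)) ℂ, IsClique (bipartiteSystem m n) 3 P := by
  refine BipHelper.main (m + n) ⟨0, by omega⟩ ⟨1, by omega⟩ ⟨m, by omega⟩ ⟨m + 1, by omega⟩
    (fun i => decide ((i : ℕ) < m)) ?_ ?_ ?_ ?_ ?_ ?_ (bipartiteSystem m n) ?_ ?_ ?_
  · simp [Fin.ext_iff]
  · simp [Fin.ext_iff]
  · simp; omega
  · simp; omega
  · simp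
  · simp
  · exact ⟨1, 1, fun i j => ⟨fun _ => by simp [Matrix.one_apply],
      fun _ => by simp [Matrix.one_apply]⟩⟩
  · refine ⟨1, -1, fun i j => ⟨fun hij => ?_, fun hij => ?_⟩⟩
    · by_cases h : i = j
      · subst h; simp [Matrix.diagonal_apply_eq, hij.1]
      · simp [Matrix.diagonal_apply_ne _ h, h]
    · by_cases h : i = j
      · subst h
        have : ¬ (i : ℕ) < m := hij.1
        simp [Matrix.diagonal_apply_eq, this]
      · simp [Matrix.diagonal_apply_ne _ h, h]
  · intro p q hpq
    refine ⟨0, 0, fun i j => ⟨fun hij => ?_, fun hij => ?_⟩⟩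
    · have hor : ¬ (p : ℕ) < m ∨ ¬ (q : ℕ) < m := by
        by_cases hp : (p : ℕ) < m
        · right; intro hq'; exact hpq (by simp [hp, hq'])
        · left; exact hp
      rcases hor with h | h
      · have hip : i ≠ p := fun he => h (he ▸ hij.1)
        simp [Matrix.vecMulVec_apply, Pi.single_apply, hip]
      · have hjq : j ≠ q := fun he => h (he ▸ hij.2)
        simp [Matrix.vecMulVec_apply, Pi.single_apply, hjq]
    · have hor : (p : ℕ) < m ∨ (q : ℕ) < m := by
        by_cases hp : (p : ℕ) < m
        · left; exact hp
        · right
          by_contra hq'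
          exact hpq (by simp [hp, hq'])
      rcases hor with h | h
      · have hip : i ≠ p := fun he => hij.1 (he ▸ h)
        simp [Matrix.vecMulVec_apply, Pi.single_apply, hip]
      · have hjq : j ≠ q := fun he => hij.2 (he ▸ h)
        simp [Matrix.vecMulVec_apply, Pi.single_apply, hjq]
end

section
/- For any n ≥ 1, every operator system W ⊆ M_{1+n}(ℂ) with K_{1,n} ⊆ W and dim(W) ≤ dim(K_{1,n}) + 2 is triangle-free. -/
open Matrix

namespace BipTF
open Module Submodule
variable {N : ℕ}
abbrev Mat (N : ℕ) := Matrix (Fin N) (Fin N) ℂ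

noncomputable def compr (P : Mat N) : Mat N →ₗ[ℂ] Mat N where
  toFun A := P * A * P
  map_add' A B := by show P * (A + B) * P = P * A * P + P * B * P; rw [Matrix.mul_add, Matrix.add_mul]
  map_smul' c A := by simp only [RingHom.id_apply]; rw [Matrix.mul_smul, Matrix.smul_mul]

@[simp] lemma compr_apply (P A : Mat N) : compr P A = P * A * P := rfl

def lvmv (u : Fin N → ℂ) : (Fin N → ℂ) →ₗ[ℂ] Mat N where
  toFun v := vecMulVec u v
  map_add' v w := by ext i j; simp [vecMulVec_apply, mul_add]
  map_smul' c v := by ext i j; simp [vecMulVec_apply]; ring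

@[simp] lemma lvmv_apply (u v : Fin N → ℂ) : lvmv u v = vecMulVec u v := rfl

def rvmv (w : Fin N → ℂ) : (Fin N → ℂ) →ₗ[ℂ] Mat N where
  toFun v := vecMulVec v w
  map_add' v v' := by ext i j; simp [vecMulVec_apply, add_mul]
  map_smul' c v := by ext i j; simp [vecMulVec_apply]; ring

@[simp] lemma rvmv_apply (w v : Fin N → ℂ) : rvmv w v = vecMulVec v w := rfl

lemma mul_vecMulVec_mul [NeZero N] (P Q : Mat N) (x y : Fin N → ℂ) :
    P * vecMulVec x y * Q = vecMulVec (P *ᵥ x) (y ᵥ* Q) := by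
  ext i j
  simp only [Matrix.mul_apply, vecMulVec_apply, mulVec, vecMul, dotProduct]
  rw [Finset.sum_mul_sum, Finset.sum_comm]
  apply Finset.sum_congr rfl; intros; rw [Finset.sum_mul]
  apply Finset.sum_congr rfl; intros; ring

lemma compr_bipartite_le (n : ℕ) (P : Mat (1 + n))
    (hherm : P.IsHermitian) (hidem : P * P = P) (hr : P.rank = 3) :
    finrank ℂ ((Submodule.span ℂ (bipartiteSystem 1 n)).map (compr P)) ≤ 6 := by
  haveI : NeZero (1 + n) := ⟨by omega⟩
  set z : Fin (1 + n) := ⟨0, by omega⟩ with hz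
  set e0 : Fin (1 + n) → ℂ := Pi.single z 1 with he0
  set u : Fin (1 + n) → ℂ := P *ᵥ e0 with hu
  set w0 : Fin (1 + n) → ℂ := e0 ᵥ* P with hw0
  have huw : ∀ k, u k = P k z := by
    intro k; rw [hu, he0, mulVec_single]; simp
  have hwv : ∀ k, w0 k = P z k := by
    intro k; rw [hw0, ← mulVec_transpose, he0, mulVec_single]; simp
  have hws : ∀ k, w0 k = star (u k) := by
    intro k; rw [hwv, huw]; exact (hherm.apply z k).symm
  set RS : Submodule ℂ (Fin (1 + n) → ℂ) := LinearMap.range Pᵀ.mulVecLin with hRS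
  set CS : Submodule ℂ (Fin (1 + n) → ℂ) := LinearMap.range P.mulVecLin with hCS
  set A : Submodule ℂ (Mat (1 + n)) := RS.map (lvmv u) with hA
  set B : Submodule ℂ (Mat (1 + n)) := CS.map (rvmv w0) with hB
  set T : Submodule ℂ (Mat (1 + n)) := (ℂ ∙ P) ⊔ (A ⊔ B) with hT
  -- row vectors compressed land in A
  have hmemA : ∀ r : Fin (1 + n) → ℂ, compr P (vecMulVec e0 r) ∈ A := by
    intro r
    rw [compr_apply, mul_vecMulVec_mul]
    exact ⟨r ᵥ* P, ⟨r, by rw [mulVecLin_apply, mulVec_transpose]⟩,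
      by simp [lvmv_apply, hu]⟩
  have hmemB : ∀ c : Fin (1 + n) → ℂ, compr P (vecMulVec c e0) ∈ B := by
    intro c
    rw [compr_apply, mul_vecMulVec_mul]
    exact ⟨P *ᵥ c, ⟨c, by rw [mulVecLin_apply]⟩, by simp [rvmv_apply, hw0]⟩
  -- the span maps into T
  have hle : (Submodule.span ℂ (bipartiteSystem 1 n)).map (compr P) ≤ T := by
    rw [Submodule.map_span, Submodule.span_le]
    rintro _ ⟨M, hM, rfl⟩
    obtain ⟨a, b, h⟩ := hM
    set r : Fin (1 + n) → ℂ := fun j => if j = z then 0 else M z j with hrdef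
    set c : Fin (1 + n) → ℂ := fun i => if i = z then 0 else M i z with hcdef
    have hfin : ∀ i : Fin (1 + n), (i : ℕ) < 1 ↔ i = z := by
      intro i; constructor
      · intro hi; apply Fin.ext; simpa [hz] using Nat.lt_one_iff.mp hi
      · rintro rfl; simp [hz]
    have hdec : M = (a - b) • vecMulVec e0 e0 + b • (1 : Mat (1 + n)) +
        vecMulVec e0 r + vecMulVec c e0 := by
      ext i j
      simp only [Matrix.add_apply, Matrix.smul_apply, vecMulVec_apply, one_apply, smul_eq_mul]
      by_cases hi : i = z <;> by_cases hj : j = z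
      · subst hi; subst hj
        have := (h z z).1 ⟨by simp [hz], by simp [hz]⟩
        simp [this, he0, hrdef, hcdef]
      · subst hi
        have hji : z ≠ j := fun e => hj e.symm
        simp [he0, hrdef, hcdef, hj, hji, Pi.single_apply]
      · subst hj
        have hiz : z ≠ i := fun e => hi e.symm
        simp [he0, hrdef, hcdef, hi, hiz, Pi.single_apply]
      · have := (h i j).2 ⟨fun hlt => hi ((hfin i).mp hlt), fun hlt => hj ((hfin j).mp hlt)⟩
        have hiz : z ≠ i := fun e => hi e.symm
        have hjz : z ≠ j := fun e => hj e.symm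
        simp [this, he0, hrdef, hcdef, hi, hj, hiz, hjz, Pi.single_apply]
    have hP1 : compr P (1 : Mat (1 + n)) ∈ T := by
      have : compr P (1 : Mat (1 + n)) = P := by simp [hidem]
      rw [this]
      exact le_sup_left (α := Submodule ℂ (Mat (1 + n))) (Submodule.mem_span_singleton_self P)
    have hAT : A ≤ T := le_trans le_sup_left le_sup_right
    have hBT : B ≤ T := le_trans le_sup_right le_sup_right
    rw [hdec]
    simp only [map_add, LinearMap.map_smul]
    exact add_mem (add_mem (add_mem (Submodule.smul_mem _ _ (hAT (hmemA e0)))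
      (Submodule.smul_mem _ _ hP1)) (hAT (hmemA r))) (hBT (hmemB c))
  -- dimension of T
  have hAB : finrank ℂ (A ⊔ B : Submodule ℂ (Mat (1 + n))) ≤ 5 := by
    by_cases hu0 : u = 0
    · have hw00 : w0 = 0 := by funext k; rw [hws k, hu0]; simp
      have hA0 : A ≤ ⊥ := by
        rintro x ⟨v, -, rfl⟩
        rw [Submodule.mem_bot, lvmv_apply]
        ext i j; simp [vecMulVec_apply, hu0]
      have hB0 : B ≤ ⊥ := by
        rintro x ⟨v, -, rfl⟩
        rw [Submodule.mem_bot, rvmv_apply]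
        ext i j; simp [vecMulVec_apply, hw00]
      have : A ⊔ B = ⊥ := by rw [le_bot_iff.mp hA0, le_bot_iff.mp hB0, sup_idem]
      rw [this, finrank_bot]
      omega
    · have hfA : finrank ℂ A ≤ 3 := by
        calc finrank ℂ A ≤ finrank ℂ RS := Submodule.finrank_map_le _ _
        _ = Pᵀ.rank := rfl
        _ = 3 := by rw [Matrix.rank_transpose, hr]
      have hfB : finrank ℂ B ≤ 3 := by
        calc finrank ℂ B ≤ finrank ℂ CS := Submodule.finrank_map_le _ _
        _ = P.rank := rfl
        _ = 3 := hr
      have hx0A : vecMulVec u w0 ∈ A :=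
        ⟨w0, ⟨e0, by rw [mulVecLin_apply, mulVec_transpose]⟩, by simp⟩
      have hx0B : vecMulVec u w0 ∈ B :=
        ⟨u, ⟨e0, by rw [mulVecLin_apply]⟩, by simp⟩
      have hx0ne : vecMulVec u w0 ≠ 0 := by
        obtain ⟨k, hk⟩ := Function.ne_iff.mp hu0
        intro hcon
        have := congrFun (congrFun hcon k) k
        rw [vecMulVec_apply, hws k] at this
        simp at this
        exact hk (by simpa using this)
      have hinf : 1 ≤ finrank ℂ (A ⊓ B : Submodule ℂ (Mat (1 + n))) := by
        rw [Nat.one_le_iff_ne_zero, ← Nat.pos_iff_ne_zero]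
        exact Module.finrank_pos_iff_exists_ne_zero.mpr
          ⟨⟨vecMulVec u w0, ⟨hx0A, hx0B⟩⟩, fun hc => hx0ne (congrArg Subtype.val hc)⟩
      have heq := Submodule.finrank_sup_add_finrank_inf_eq A B
      omega
  have hTle : finrank ℂ T ≤ 6 := by
    have h1 : finrank ℂ (ℂ ∙ P : Submodule ℂ (Mat (1 + n))) ≤ 1 := by
      by_cases hP0 : P = 0
      · subst hP0; rw [Submodule.span_zero_singleton, finrank_bot]; omega
      · rw [finrank_span_singleton hP0]
    calc finrank ℂ T ≤ finrank ℂ (ℂ ∙ P : Submodule ℂ (Mat (1 + n))) +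
        finrank ℂ (A ⊔ B : Submodule ℂ (Mat (1 + n))) :=
          Submodule.finrank_add_le_finrank_add_finrank _ _
    _ ≤ 1 + 5 := Nat.add_le_add h1 hAB
    _ = 6 := rfl
  exact le_trans (Submodule.finrank_mono hle) hTle

end BipTF

open Module Submodule BipTF in
/-- For any `n ≥ 1`, every operator system `W ⊆ M_{1+n}(ℂ)` containing `K_{1,n}` with
`dim W ≤ dim K_{1,n} + 2` is triangle-free. -/
theorem two_dim_extension_of_bipartite_triangleFree (n : ℕ) (hn : 1 ≤ n)
    (W : Submodule ℂ (Matrix (Fin (1 + n)) (Fin (1 + n)) ℂ))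
    (h1 : (1 : Matrix (Fin (1 + n)) (Fin (1 + n)) ℂ) ∈ W)
    (hstar : ∀ A ∈ W, Aᴴ ∈ W)
    (hsub : bipartiteSystem 1 n ⊆ (W : Set (Matrix (Fin (1 + n)) (Fin (1 + n)) ℂ)))
    (hdim : Module.finrank ℂ W ≤
      Module.finrank ℂ (Submodule.span ℂ (bipartiteSystem 1 n)) + 2) :
    TriangleFree (W : Set (Matrix (Fin (1 + n)) (Fin (1 + n)) ℂ)) := by
  intro P hcl
  obtain ⟨⟨hherm, hidem⟩, hr, h9⟩ := hcl
  set S := Submodule.span ℂ (bipartiteSystem 1 n) with hS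
  have hSW : S ≤ W := Submodule.span_le.mpr hsub
  obtain ⟨q, hq⟩ := (S.comap W.subtype).exists_isCompl
  set U := q.map W.subtype with hU
  have hmapS : (S.comap W.subtype).map W.subtype = S := by
    rw [Submodule.map_comap_subtype, inf_eq_right.mpr hSW]
  have hWsup : S ⊔ U = W := by
    rw [← hmapS, hU, ← Submodule.map_sup, codisjoint_iff.mp hq.codisjoint,
      Submodule.map_subtype_top]
  have hfrk : finrank ℂ (S.comap W.subtype) + finrank ℂ q = finrank ℂ W :=
    Submodule.finrank_add_eq_of_isCompl hq
  have heq1 : finrank ℂ (S.comap W.subtype) = finrank ℂ S := by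
    conv_rhs => rw [← hmapS]
    exact (Submodule.finrank_map_subtype_eq _ _).symm
  have heq2 : finrank ℂ U = finrank ℂ q := Submodule.finrank_map_subtype_eq _ _
  have hUle : finrank ℂ U ≤ 2 := by omega
  have hcmp : compressionSpace (W : Set _) P = W.map (compr P) := by
    conv_rhs => rw [← Submodule.span_eq W, Submodule.map_span]
    rfl
  have hmap : W.map (compr P) = S.map (compr P) ⊔ U.map (compr P) := by
    rw [← hWsup, Submodule.map_sup]
  have hle : finrank ℂ (W.map (compr P)) ≤ 8 := by
    rw [hmap]
    calc finrank ℂ (S.map (compr P) ⊔ U.map (compr P) :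
          Submodule ℂ (Matrix (Fin (1 + n)) (Fin (1 + n)) ℂ)) ≤
        finrank ℂ (S.map (compr P)) + finrank ℂ (U.map (compr P)) :=
          Submodule.finrank_add_le_finrank_add_finrank _ _
    _ ≤ 6 + 2 := Nat.add_le_add (compr_bipartite_le n P hherm hidem hr)
        (le_trans (Submodule.finrank_map_le _ _) hUle)
    _ = 8 := rfl
  rw [hcmp] at h9
  rw [h9] at hle
  norm_num at hle
end

section
/- For every k ≥ 1, the diagonal operator system D_k ⊆ M_k(ℂ) has a k-coloring but no (k-1)-coloring; in particular the chromatic number of D_k is exactly k. -/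
open Matrix

/-- A `k`-coloring of a set `V ⊆ M_n(ℂ)`: projections `P_1, …, P_k` summing to the
identity, each of which is an anticlique for `V`. -/
def IsColoring {n : ℕ} (V : Set (Matrix (Fin n) (Fin n) ℂ)) (k : ℕ)
    (P : Fin k → Matrix (Fin n) (Fin n) ℂ) : Prop :=
  (∑ i, P i) = 1 ∧
    ∀ i, IsProjection (P i) ∧ ∀ A ∈ V, ∃ c : ℂ, P i * A * P i = c • P i


theorem sumStd (n : ℕ) : (∑ i : Fin n, Matrix.single i i (1:ℂ)) = 1 := by
  ext a b
  simp [Matrix.single, Matrix.sum_apply, one_apply]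
  by_cases h : a = b
  · subst h; simp [Finset.filter_eq']
  · simp [h, Finset.filter_eq']

theorem stdCompress {n : ℕ} (i : Fin n) (A : Matrix (Fin n) (Fin n) ℂ) :
    Matrix.single i i (1:ℂ) * A * Matrix.single i i 1 = A i i • Matrix.single i i 1 := by
  ext a b
  simp only [Matrix.mul_apply, Matrix.single, Matrix.of_apply, ite_and, ite_mul, mul_ite,
    zero_mul, mul_zero, mul_one, one_mul, Finset.sum_ite_eq, Finset.sum_ite_eq',
    Finset.mem_univ, if_true, Matrix.smul_apply, smul_eq_mul]
  by_cases ha : i = a <;> by_cases hb : i = b <;> simp [ha, hb, mul_comm]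

theorem keyTrace {n : ℕ} (P : Matrix (Fin n) (Fin n) ℂ) (hH : P.IsHermitian) (hI : P * P = P)
    (hne : P ≠ 0)
    (h : ∀ A : Matrix (Fin n) (Fin n) ℂ, A.IsDiag → ∃ c : ℂ, P * A * P = c • P) :
    P.trace = 1 := by
  obtain ⟨a, b, hab⟩ : ∃ a b, P a b ≠ 0 := by
    by_contra hc
    push_neg at hc
    exact hne (by ext a b; simp [hc])
  have herm : ∀ i j, P j i = star (P i j) := fun i j => (hH.apply j i).symm
  have hPaa : P a a = ∑ m, (Complex.normSq (P a m) : ℂ) := by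
    conv_lhs => rw [← hI, Matrix.mul_apply]
    refine Finset.sum_congr rfl fun m _ => ?_
    rw [herm a m]
    exact Complex.mul_conj (P a m)
  have hdiag : P a a ≠ 0 := by
    rw [hPaa, ← Complex.ofReal_sum]
    have h1 : 0 < Complex.normSq (P a b) := Complex.normSq_pos.2 hab
    have h2 : Complex.normSq (P a b) ≤ ∑ m, Complex.normSq (P a m) :=
      Finset.single_le_sum (fun i _ => Complex.normSq_nonneg _) (Finset.mem_univ b)
    exact_mod_cast (lt_of_lt_of_le h1 h2).ne'
  obtain ⟨c, hc⟩ := h (Matrix.single a a 1) (by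
    intro i j hij
    simp [Matrix.single]
    rintro rfl rfl; exact absurd rfl hij)
  have hent : ∀ m n', P m a * P a n' = c * P m n' := by
    intro m n'
    have h2 := congrFun (congrFun hc m) n'
    simp only [Matrix.mul_apply, Matrix.single, Matrix.of_apply, ite_and, ite_mul, mul_ite,
      zero_mul, mul_zero, mul_one, Finset.sum_ite_eq, Finset.sum_ite_eq', Finset.mem_univ,
      if_true, Matrix.smul_apply, smul_eq_mul] at h2
    exact h2
  have hca : c = P a a := (mul_right_cancel₀ hdiag (hent a a)).symm
  have hcne : c ≠ 0 := hca ▸ hdiag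
  have hkey : c * P.trace = c := by
    calc c * P.trace = ∑ m, c * P m m := by
          rw [Matrix.trace, Finset.mul_sum]; rfl
      _ = ∑ m, P a m * P m a := by
          refine Finset.sum_congr rfl fun m _ => ?_
          rw [← hent m m]; ring
      _ = (P * P) a a := (Matrix.mul_apply).symm
      _ = P a a := by rw [hI]
      _ = c := hca.symm
  exact mul_left_cancel₀ hcne (by rw [hkey, mul_one])

theorem lowerBound {k m : ℕ} (P : Fin m → Matrix (Fin k) (Fin k) ℂ)
    (h : IsColoring { M : Matrix (Fin k) (Fin k) ℂ | M.IsDiag } m P) : k ≤ m := by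
  have htr : ∑ i, (P i).trace = (k : ℂ) := by
    rw [← Matrix.trace_sum, h.1, Matrix.trace_one]
    simp
  set S := Finset.univ.filter (fun i => P i ≠ 0) with hS
  have hcard : ∑ i, (P i).trace = (S.card : ℂ) := by
    rw [← Finset.sum_filter_add_sum_filter_not Finset.univ (fun i => P i ≠ 0)]
    have h1 : ∑ i ∈ S, (P i).trace = (S.card : ℂ) := by
      rw [Finset.sum_congr rfl (fun i hi => keyTrace (P i) (h.2 i).1.1 (h.2 i).1.2
        (Finset.mem_filter.1 hi).2 (fun A hA => (h.2 i).2 A hA))]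
      simp [hS]
    have h2 : ∑ i ∈ Finset.univ.filter (fun i => ¬ P i ≠ 0), (P i).trace = 0 := by
      refine Finset.sum_eq_zero fun i hi => ?_
      have : P i = 0 := not_not.1 (Finset.mem_filter.1 hi).2
      rw [this, Matrix.trace_zero]
    rw [h1, h2, add_zero]
  have heq : (k : ℂ) = (S.card : ℂ) := htr ▸ hcard
  have hk : k = S.card := Nat.cast_injective heq
  rw [hk]
  calc S.card ≤ (Finset.univ : Finset (Fin m)).card := Finset.card_filter_le _ _
    _ = m := by simp

/-- For every `k ≥ 1`, the diagonal operator system `D_k` has a `k`-coloring but no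
`(k-1)`-coloring; in particular its chromatic number is exactly `k`. -/
theorem diagonal_chromatic_number (k : ℕ) (hk : 1 ≤ k) :
    (∃ P : Fin k → Matrix (Fin k) (Fin k) ℂ,
      IsColoring { M : Matrix (Fin k) (Fin k) ℂ | M.IsDiag } k P) ∧
    (¬ ∃ P : Fin (k - 1) → Matrix (Fin k) (Fin k) ℂ,
      IsColoring { M : Matrix (Fin k) (Fin k) ℂ | M.IsDiag } (k - 1) P) ∧
    sInf { m : ℕ | ∃ P : Fin m → Matrix (Fin k) (Fin k) ℂ,
      IsColoring { M : Matrix (Fin k) (Fin k) ℂ | M.IsDiag } m P } = k := by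
  have exist : ∃ P : Fin k → Matrix (Fin k) (Fin k) ℂ,
      IsColoring { M : Matrix (Fin k) (Fin k) ℂ | M.IsDiag } k P := by
    refine ⟨fun i => Matrix.single i i 1, sumStd k, fun i => ⟨⟨?_, ?_⟩, fun A _ => ⟨A i i, stdCompress i A⟩⟩⟩
    · show _ᴴ = _
      ext a b
      simp [Matrix.single, conjTranspose_apply, and_comm]
    · simp
  refine ⟨exist, ?_, ?_⟩
  · rintro ⟨P, hP⟩
    have := lowerBound P hP
    omega
  · refine le_antisymm (Nat.sInf_le exist) (le_csInf ⟨k, exist⟩ ?_)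
    rintro m ⟨P, hP⟩
    exact lowerBound P hP
end
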